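/- arXiv:1710.09133 — 8 statements merged into one kernel-verified Lean document; each statement's English description precedes it below -/
import Mathlib

section
/- Let Λ be a ring in which p^{i+1} = 0 for a prime p. Then for every positive integer n and every integer k with 1 ≤ k ≤ p^{n+i}, if p^n does not divide k then the binomial coefficient C(p^{n+i}, k) is zero in Λ (i.e., is divisible by p^{i+1} in ℤ). -/
theorem Nat.Prime.pow_succ_dvd_choose_prime_pow_add {p n i k : ℕ} (hp : p.Prime)
    (hkn : k ≤ p ^ (n + i)) (hk : ¬ p ^ n ∣ k) : p ^ (i + 1) ∣ (p ^ (n + i)).choose k := by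
  have hk0 : k ≠ 0 := by
    rintro rfl
    exact hk (dvd_zero _)
  have hlt : multiplicity p k < n := lt_of_not_ge (mt pow_dvd_of_le_multiplicity hk)
  apply pow_dvd_of_le_emultiplicity
  rw [hp.emultiplicity_choose_prime_pow hkn hk0]
  exact_mod_cast (by omega : i + 1 ≤ n + i - multiplicity p k)

theorem Nat.cast_eq_zero_of_pow_dvd {R : Type*} [Semiring R] {p e m : ℕ}
    (hp : (p : R) ^ e = 0) (h : p ^ e ∣ m) : (m : R) = 0 := by
  obtain ⟨c, rfl⟩ := h
  rw [Nat.cast_mul, Nat.cast_pow, hp, zero_mul]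

theorem binom_zero_of_not_dvd_general (p i n k : ℕ) (hp : p.Prime)
    (hk2 : k ≤ p ^ (n + i)) (hnd : ¬ p ^ n ∣ k)
    (Λ : Type*) [Ring Λ] (hΛ : (p : Λ) ^ (i + 1) = 0) :
    ((Nat.choose (p ^ (n + i)) k : Λ) = 0) ∧ p ^ (i + 1) ∣ Nat.choose (p ^ (n + i)) k := by
  have hdvd := hp.pow_succ_dvd_choose_prime_pow_add hk2 hnd
  exact ⟨Nat.cast_eq_zero_of_pow_dvd hΛ hdvd, hdvd⟩

/-- If `p^(i+1) = 0` in a ring `Λ`, then for `1 ≤ k ≤ p^(n+i)` with `p^n ∤ k`, the binomial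
coefficient `C(p^(n+i), k)` is zero in `Λ`, i.e. it is divisible by `p^(i+1)` in `ℤ`. -/
theorem binom_zero_of_not_dvd (p i n k : ℕ) (hp : p.Prime) (hn : 1 ≤ n)
    (hk1 : 1 ≤ k) (hk2 : k ≤ p ^ (n + i)) (hnd : ¬ p ^ n ∣ k)
    (Λ : Type*) [Ring Λ] (hΛ : (p : Λ) ^ (i + 1) = 0) :
    ((Nat.choose (p ^ (n + i)) k : Λ) = 0) ∧ p ^ (i + 1) ∣ Nat.choose (p ^ (n + i)) k :=
  binom_zero_of_not_dvd_general p i n k hp hk2 hnd Λ hΛ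
end

section
/- Let Λ be a commutative ring in which p^{i+1} = 0, and let γ be an element of a commutative Λ-algebra with t = γ - 1. Then γ^{p^{n+i}} - 1 = t^{p^n} · Σ_{k=1}^{p^i} C(p^{n+i}, k·p^n) · t^{p^n(k-1)}, i.e., γ^{p^{n+i}} - 1 is divisible by (γ-1)^{p^n}. -/
/-!
Expand `γ ^ p^(n+i) = (t + 1) ^ p^(n+i)` binomially. By Kummer, `p` divides `C(p^(n+i), k)` to the
power `n + i - v_p(k)`, which is at least `i + 1` when `p^n ∤ k`; so only the terms with `p^n ∣ k`
survive in `Λ`-algebras, and each of the surviving terms with `k ≠ 0` is divisible by `t ^ p^n`.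
-/

open Finset

theorem Nat.Prime.pow_succ_dvd_choose_of_not_pow_dvd {p n i k : ℕ} (hp : p.Prime)
    (hk : ¬ p ^ n ∣ k) : p ^ (i + 1) ∣ (p ^ (n + i)).choose k := by
  rcases le_or_gt k (p ^ (n + i)) with hkm | hkm
  · have hk0 : k ≠ 0 := by rintro rfl; exact hk (dvd_zero _)
    rw [hp.pow_dvd_iff_le_factorization (Nat.choose_pos hkm).ne',
      Nat.factorization_choose_prime_pow hp hkm hk0]
    rw [hp.pow_dvd_iff_le_factorization hk0] at hk
    omega
  · rw [Nat.choose_eq_zero_of_lt hkm]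
    exact dvd_zero _

theorem natCast_choose_prime_pow_eq_zero {R : Type*} [Semiring R] {p n i k : ℕ} (hp : p.Prime)
    (hR : (p : R) ^ (i + 1) = 0) (hk : ¬ p ^ n ∣ k) : ((p ^ (n + i)).choose k : R) = 0 := by
  obtain ⟨c, hc⟩ := hp.pow_succ_dvd_choose_of_not_pow_dvd (i := i) hk
  rw [hc, Nat.cast_mul, Nat.cast_pow, hR, zero_mul]

section

variable {R : Type*} [CommRing R] {d q : ℕ}

theorem add_one_pow_eq_sum_of_choose_eq_zero (t : R) (hd : 0 < d)
    (h : ∀ k, ¬ d ∣ k → ((d * q).choose k : R) = 0) :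
    (t + 1) ^ (d * q) = ∑ k ∈ range (q + 1), ((d * q).choose (k * d) : R) * t ^ (k * d) := by
  rw [add_pow, ← sum_image (f := fun k => ((d * q).choose k : R) * t ^ k)
    fun a _ b _ hab => Nat.eq_of_mul_eq_mul_right hd hab]
  symm
  refine sum_subset (fun x hx => ?_) (fun x hx hx' => ?_) |>.trans (sum_congr rfl fun k _ => ?_)
  · simp only [mem_image, mem_range] at hx ⊢
    obtain ⟨k, hk, rfl⟩ := hx
    nlinarith
  · rw [h x, zero_mul]
    rintro ⟨k, rfl⟩
    simp only [mem_image, mem_range, not_exists, not_and] at hx hx'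
    exact hx' k (by nlinarith) (mul_comm _ _)
  · rw [one_pow, mul_one, mul_comm]

theorem add_one_pow_sub_one_eq_of_choose_eq_zero (t : R) (hd : 0 < d)
    (h : ∀ k, ¬ d ∣ k → ((d * q).choose k : R) = 0) :
    (t + 1) ^ (d * q) - 1 =
      t ^ d * ∑ k ∈ Icc 1 q, ((d * q).choose (k * d) : R) * t ^ (d * (k - 1)) := by
  rw [add_one_pow_eq_sum_of_choose_eq_zero t hd h, sum_range_succ', zero_mul, Nat.choose_zero_right,
    pow_zero, Nat.cast_one, mul_one, add_sub_cancel_right, ← Ico_add_one_right_eq_Icc,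
    sum_Ico_eq_sum_range, Nat.add_sub_cancel, mul_sum]
  refine sum_congr rfl fun k _ => ?_
  rw [add_comm 1 k, Nat.add_sub_cancel, add_one_mul, pow_add, mul_comm d k]
  ring

end

theorem pow_sub_one_eq_general (p i n : ℕ) (hp : p.Prime)
    (Λ : Type*) [CommRing Λ] (hΛ : (p : Λ) ^ (i + 1) = 0)
    (A : Type*) [CommRing A] [Algebra Λ A] (γ : A) :
    γ ^ (p ^ (n + i)) - 1 =
      (γ - 1) ^ (p ^ n) *
        ∑ k ∈ Finset.Icc 1 (p ^ i),
          (Nat.choose (p ^ (n + i)) (k * p ^ n) : A) * (γ - 1) ^ (p ^ n * (k - 1)) ∧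
    (γ - 1) ^ (p ^ n) ∣ (γ ^ (p ^ (n + i)) - 1) := by
  have hA : (p : A) ^ (i + 1) = 0 := by
    rw [← map_natCast (algebraMap Λ A), ← map_pow, hΛ, map_zero]
  have h := add_one_pow_sub_one_eq_of_choose_eq_zero (γ - 1) (pow_pos hp.pos n) (q := p ^ i)
    fun k hk => by rw [← pow_add]; exact natCast_choose_prime_pow_eq_zero hp hA hk
  rw [sub_add_cancel, ← pow_add] at h
  exact ⟨h, h ▸ dvd_mul_right _ _⟩

/-- If `p^(i+1) = 0` in a commutative ring `Λ` and `γ` is an element of a commutative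
`Λ`-algebra `A`, with `t = γ - 1`, then
`γ^(p^(n+i)) - 1 = t^(p^n) * ∑_{k=1}^{p^i} C(p^(n+i), k·p^n) t^(p^n (k-1))`;
in particular `γ^(p^(n+i)) - 1` is divisible by `(γ-1)^(p^n)`. -/
theorem pow_sub_one_eq (p i n : ℕ) (hp : p.Prime) (hn : 1 ≤ n)
    (Λ : Type*) [CommRing Λ] (hΛ : (p : Λ) ^ (i + 1) = 0)
    (A : Type*) [CommRing A] [Algebra Λ A] (γ : A) :
    γ ^ (p ^ (n + i)) - 1 =
      (γ - 1) ^ (p ^ n) *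
        ∑ k ∈ Finset.Icc 1 (p ^ i),
          (Nat.choose (p ^ (n + i)) (k * p ^ n) : A) * (γ - 1) ^ (p ^ n * (k - 1)) ∧
    (γ - 1) ^ (p ^ n) ∣ (γ ^ (p ^ (n + i)) - 1) :=
  pow_sub_one_eq_general p i n hp Λ hΛ A γ
end

section
/- Let R be a noetherian ring, R[t] the polynomial ring with t central, and S_t = { f ∈ R[t] : f(0) ∈ R^× }. Then S_t is a left denominator set (satisfies the left Ore condition) consisting of non-zero-divisors, so the localisation R[t]_{S_t} exists and is noetherian. -/
open Polynomial
open scoped PowerSeries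

/-!
If `f(0)` is a unit then `f` is invertible in `R⟦t⟧`, so `f` is regular in `R[t]`.

For the Ore condition, given `f ∈ S_t` and `a`, put `s = a f⁻¹ ∈ R⟦t⟧`; it suffices to find
`y ∈ S_t` with `y s ∈ R[t]`. Let `s_n = (s - trunc_n s) / t^n` be the tails of `s`. For
`n > deg a` the series `s_n f` is a polynomial of degree `< deg f`, and `u ↦ u f` is injective,
so the tails live in a copy of the noetherian left `R`-module `R^(deg f)`. Hence some tail is a
left `R`-combination of earlier ones, `s_(N+K) = ∑ r_i s_(N+i)`, and then
`y = 1 - ∑ r_i t^(K-i)` makes `y s` a polynomial.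

Finally `R[t]` is noetherian (Hilbert's basis theorem, whose leading-coefficient proof works for
left ideals over a noncommutative ring), and a left ideal of the Ore localisation is determined by
its contraction to `R[t]`, since every fraction is a unit times the image of a polynomial.
-/

namespace Ideal

section Semiring

variable {R : Type*} [Semiring R] (I : Ideal R[X])

theorem mem_leadingCoeffNth_iff_natDegree_le (n : ℕ) (x : R) :
    x ∈ I.leadingCoeffNth n ↔ ∃ p ∈ I, p.natDegree ≤ n ∧ p.coeff n = x := by
  simp only [leadingCoeffNth, degreeLE, Submodule.mem_map, Submodule.mem_inf, mem_ofPolynomial,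
    Polynomial.mem_degreeLE, lcoeff_apply, natDegree_le_iff_degree_le]
  exact ⟨fun ⟨p, ⟨hpn, hpI⟩, hp⟩ => ⟨p, hpI, hpn, hp⟩,
    fun ⟨p, hpI, hpn, hp⟩ => ⟨p, ⟨hpn, hpI⟩, hp⟩⟩

theorem leadingCoeffNth_monotone : Monotone I.leadingCoeffNth := by
  refine monotone_nat_of_le_succ fun n x hx => ?_
  obtain ⟨p, hpI, hpn, rfl⟩ := (I.mem_leadingCoeffNth_iff_natDegree_le n x).1 hx
  exact (I.mem_leadingCoeffNth_iff_natDegree_le (n + 1) _).2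
    ⟨X * p, I.mul_mem_left X hpI, natDegree_mul_le.trans (by grw [natDegree_X_le]; omega),
      coeff_X_mul p n⟩

end Semiring

section Ring

variable {R : Type*} [Ring R] (I : Ideal R[X])

theorem fg_degreeLE [IsNoetherianRing R] (n : ℕ) : (I.degreeLE n).FG := by
  classical
  exact isNoetherian_submodule_left.1
    (isNoetherian_of_fg_of_noetherian _ ⟨_, degreeLE_eq_span_X_pow.symm⟩) I.ofPolynomial

theorem le_span_degreeLE_of_leadingCoeffNth_eq {N : ℕ}
    (hN : ∀ n, N ≤ n → I.leadingCoeffNth N = I.leadingCoeffNth n) :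
    I ≤ Submodule.span R[X] (I.degreeLE N) := by
  have hmem {p : R[X]} (hpI : p ∈ I) (hpN : p.natDegree ≤ N) : p ∈ I.degreeLE N :=
    ⟨Polynomial.mem_degreeLE.2 (degree_le_of_natDegree_le hpN), hpI⟩
  suffices ∀ d, ∀ p ∈ I, p.natDegree ≤ d → p ∈ Submodule.span R[X] (I.degreeLE N) from
    fun p hp => this _ p hp le_rfl
  intro d
  induction d using Nat.strong_induction_on with
  | _ d ih =>
  intro p hpI hpd
  by_cases hdN : d ≤ N
  · exact Submodule.subset_span (hmem hpI (hpd.trans hdN))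
  have hlc : p.coeff d ∈ I.leadingCoeffNth N :=
    hN d (by omega) ▸ (I.mem_leadingCoeffNth_iff_natDegree_le d _).2 ⟨p, hpI, hpd, rfl⟩
  obtain ⟨q, hqI, hqN, hq⟩ := (I.mem_leadingCoeffNth_iff_natDegree_le N _).1 hlc
  have hshift : X ^ (d - N) * q ∈ Submodule.span R[X] (I.degreeLE N) :=
    Submodule.smul_mem _ _ (Submodule.subset_span (hmem hqI hqN))
  have hdeg : (p - X ^ (d - N) * q).natDegree ≤ d - 1 := by
    refine natDegree_le_pred ((natDegree_sub_le_of_le hpd ?_).trans (max_self d).le) ?_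
    · exact natDegree_mul_le.trans (by grw [natDegree_X_pow_le, hqN]; omega)
    · rw [coeff_sub, coeff_X_pow_mul', if_pos (by omega), Nat.sub_sub_self (by omega), hq,
        sub_self]
  simpa using add_mem (ih (d - 1) (by omega) _ (I.sub_mem hpI (I.mul_mem_left _ hqI)) hdeg) hshift

end Ring

end Ideal

theorem Polynomial.isNoetherianRing_of_ring (R : Type*) [Ring R] [IsNoetherianRing R] :
    IsNoetherianRing R[X] := by
  rw [isNoetherianRing_iff, isNoetherian_def]
  intro (I : Ideal R[X])
  obtain ⟨N, hN⟩ := monotone_stabilizes_iff_noetherian.mpr ‹_›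
    ⟨I.leadingCoeffNth, I.leadingCoeffNth_monotone⟩
  obtain ⟨G, hG⟩ := I.fg_degreeLE N
  refine ⟨G, le_antisymm (Submodule.span_le.2 fun p hp => ?_) ?_⟩
  · exact (hG ▸ Submodule.subset_span hp : p ∈ I.degreeLE N).2
  · rw [← Submodule.span_span_of_tower R, hG]
    exact I.le_span_degreeLE_of_leadingCoeffNth_eq hN

theorem IsNoetherian.exists_eq_sum_smul {R M : Type*} [Semiring R] [AddCommMonoid M] [Module R M]
    [IsNoetherian R M] (v : ℕ → M) : ∃ K, ∃ r : Fin K → R, v K = ∑ i, r i • v i := by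
  let spans : ℕ →o Submodule R M := ⟨fun k => Submodule.span R (v '' Set.Iio k),
    fun k l hkl => Submodule.span_mono (Set.image_mono (Set.Iio_subset_Iio hkl))⟩
  obtain ⟨K, hK⟩ := monotone_stabilizes_iff_noetherian.mpr ‹_› spans
  have hvK : v K ∈ spans (K + 1) := Submodule.subset_span ⟨K, K.lt_succ_self, rfl⟩
  rw [← hK (K + 1) K.le_succ] at hvK
  replace hvK : v K ∈ Submodule.span R (Set.range fun i : Fin K => v i) := by
    rwa [Set.range_comp' v Fin.val, Fin.range_val]
  obtain ⟨r, hr⟩ := (Submodule.mem_span_range_iff_exists_fun R).1 hvK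
  exact ⟨K, r, hr.symm⟩

namespace PowerSeries

variable {R : Type*} [Ring R]

noncomputable def tail (n : ℕ) (φ : R⟦X⟧) : R⟦X⟧ := mk fun i => coeff (i + n) φ

theorem X_pow_mul_tail_add_trunc (n : ℕ) (φ : R⟦X⟧) :
    X ^ n * tail n φ + (trunc n φ : R⟦X⟧) = φ :=
  (eq_X_pow_mul_shift_add_trunc n φ).symm

theorem coeff_tail_mul_eq_zero {s : R⟦X⟧} {a f : R[X]} (h : s * (f : R⟦X⟧) = a) {n m : ℕ}
    (hn : a.natDegree < n) (hm : f.natDegree ≤ m) : coeff m (tail n s * (f : R⟦X⟧)) = 0 := by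
  obtain ⟨k, rfl⟩ : ∃ k, n = k + 1 := ⟨n - 1, by omega⟩
  have hsplit : X ^ (k + 1) * (tail (k + 1) s * (f : R⟦X⟧)) =
      (a : R⟦X⟧) - ((trunc (k + 1) s * f : R[X]) : R⟦X⟧) := by
    rw [Polynomial.coe_mul, ← h, eq_sub_iff_add_eq, ← mul_assoc, ← add_mul,
      X_pow_mul_tail_add_trunc]
  have hdeg : (trunc (k + 1) s * f).natDegree < m + (k + 1) :=
    natDegree_mul_le.trans_lt (by have := natDegree_trunc_lt s k; omega)
  have := congrArg (coeff (m + (k + 1))) hsplit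
  rwa [coeff_X_pow_mul, map_sub, Polynomial.coeff_coe, Polynomial.coeff_coe,
    coeff_eq_zero_of_natDegree_lt (by omega), coeff_eq_zero_of_natDegree_lt hdeg, sub_zero] at this

theorem coeff_sum_smul_mul (m : ℕ) {ι : Type*} (s : Finset ι) (r : ι → R) (t : ι → R⟦X⟧)
    (F : R⟦X⟧) : coeff m ((∑ i ∈ s, r i • t i) * F) = ∑ i ∈ s, r i * coeff m (t i * F) := by
  simp only [Finset.sum_mul, map_sum, smul_eq_C_mul, mul_assoc, coeff_C_mul]

theorem exists_tail_eq_sum_smul [IsNoetherianRing R] {s : R⟦X⟧} {a f : R[X]}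
    (hf : IsUnit (f : R⟦X⟧)) (h : s * (f : R⟦X⟧) = a) :
    ∃ N K, ∃ r : Fin K → R, tail (N + K) s = ∑ i, r i • tail (N + i) s := by
  obtain ⟨K, r, hr⟩ := IsNoetherian.exists_eq_sum_smul (R := R)
    fun k (i : Fin f.natDegree) => coeff i (tail (a.natDegree + 1 + k) s * (f : R⟦X⟧))
  refine ⟨a.natDegree + 1, K, r, ?_⟩
  rw [← sub_eq_zero, ← hf.mul_left_eq_zero]
  ext m
  rw [sub_mul, map_sub, coeff_sum_smul_mul, map_zero, sub_eq_zero]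
  by_cases hm : m < f.natDegree
  · simpa using congrFun hr ⟨m, hm⟩
  · have hzero {j : ℕ} := coeff_tail_mul_eq_zero h (n := a.natDegree + 1 + j) (by omega)
      (not_lt.1 hm)
    simp [hzero]

theorem exists_mul_eq_coe_of_tail_eq_sum_smul {s : R⟦X⟧} {N K : ℕ} {r : Fin K → R}
    (h : tail (N + K) s = ∑ i, r i • tail (N + i) s) :
    ∃ y x : R[X], y.coeff 0 = 1 ∧ (y : R⟦X⟧) * s = x := by
  refine ⟨1 - ∑ i, Polynomial.C (r i) * Polynomial.X ^ (K - (i : ℕ)),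
    trunc (N + K) s - ∑ i, Polynomial.C (r i) * Polynomial.X ^ (K - (i : ℕ)) * trunc (N + i) s,
    ?_, ?_⟩
  · have hne (i : Fin K) : 0 ≠ K - (i : ℕ) := by omega
    simp [hne]
  · have hmul (i : Fin K) (t : R⟦X⟧) :
        C (r i) * X ^ (K - (i : ℕ)) * (X ^ (N + i) * t) = X ^ (N + K) * (r i • t) := by
      rw [mul_assoc, ← mul_assoc (X ^ _), ← pow_add, show K - i + (N + i) = N + K by omega,
        smul_eq_C_mul, ← mul_assoc, ← mul_assoc, (commute_X_pow _ _).eq]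
    simp only [← Polynomial.coeToPowerSeries.ringHom_apply, map_sub, map_one, map_sum, map_mul,
      map_pow]
    simp only [Polynomial.coeToPowerSeries.ringHom_apply, Polynomial.coe_C, Polynomial.coe_X]
    calc (1 - ∑ i, C (r i) * X ^ (K - (i : ℕ))) * s
        = s - ∑ i, C (r i) * X ^ (K - (i : ℕ)) *
            (X ^ (N + i) * tail (N + i) s + (trunc (N + i) s : R⟦X⟧)) := by
          simp only [sub_mul, one_mul, Finset.sum_mul, X_pow_mul_tail_add_trunc]
      _ = s - X ^ (N + K) * tail (N + K) s -
            ∑ i, C (r i) * X ^ (K - (i : ℕ)) * (trunc (N + i) s : R⟦X⟧) := by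
          simp only [mul_add, Finset.sum_add_distrib, hmul, ← Finset.mul_sum, h]
          abel
      _ = _ := by
          nth_rw 1 [← X_pow_mul_tail_add_trunc (N + K) s]
          abel

end PowerSeries

namespace Polynomial

variable {R : Type*}

theorem isUnit_coe_of_isUnit_coeff_zero [Ring R] {f : R[X]} (hf : IsUnit (f.coeff 0)) :
    IsUnit (f : R⟦X⟧) := by
  rwa [PowerSeries.isUnit_iff_constantCoeff, constantCoeff_coe]

theorem isRegular_of_isUnit_coeff_zero [Ring R] {f : R[X]} (hf : IsUnit (f.coeff 0)) :
    IsRegular f := by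
  have hreg := (isUnit_coe_of_isUnit_coeff_zero hf).isRegular
  refine ⟨fun a b hab => coe_injective R (hreg.left ?_),
    fun a b hab => coe_injective R (hreg.right ?_)⟩
  · simpa only [← coe_mul] using congrArg ((↑) : R[X] → R⟦X⟧) hab
  · simpa only [← coe_mul] using congrArg ((↑) : R[X] → R⟦X⟧) hab

theorem exists_mul_eq_mul_of_isUnit_coeff_zero [Ring R] [IsNoetherianRing R] {f : R[X]}
    (hf : IsUnit (f.coeff 0)) (a : R[X]) : ∃ x y : R[X], y.coeff 0 = 1 ∧ x * f = y * a := by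
  obtain ⟨u, hu⟩ := isUnit_coe_of_isUnit_coeff_zero hf
  have hs : (a * ↑u⁻¹ : R⟦X⟧) * f = a := by rw [← hu, mul_assoc, u.inv_mul, mul_one]
  obtain ⟨N, K, r, hr⟩ := PowerSeries.exists_tail_eq_sum_smul (hu ▸ u.isUnit) hs
  obtain ⟨y, x, hy, hyx⟩ := PowerSeries.exists_mul_eq_coe_of_tail_eq_sum_smul hr
  refine ⟨x, y, hy, coe_injective R ?_⟩
  rw [coe_mul, coe_mul, ← hyx, mul_assoc, hs]

variable (R) in
noncomputable def unitConstantCoeffSubmonoid [Semiring R] : Submonoid R[X] :=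
  (IsUnit.submonoid R).comap constantCoeff

theorem mem_unitConstantCoeffSubmonoid [Semiring R] {f : R[X]} :
    f ∈ unitConstantCoeffSubmonoid R ↔ IsUnit (f.coeff 0) := Iff.rfl

noncomputable instance [Ring R] [IsNoetherianRing R] :
    OreLocalization.OreSet (unitConstantCoeffSubmonoid R) :=
  Classical.choice <| OreLocalization.nonempty_oreSet_iff.2
    ⟨fun _ _ s h => ⟨1, by rw [(isRegular_of_isUnit_coeff_zero s.2).right h]⟩,
     fun a s => by
      obtain ⟨x, y, hy, hxy⟩ := exists_mul_eq_mul_of_isUnit_coeff_zero s.2 a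
      exact ⟨x, ⟨y, mem_unitConstantCoeffSubmonoid.2 (hy ▸ isUnit_one)⟩, hxy.symm⟩⟩

end Polynomial

theorem OreLocalization.exists_numeratorHom_mul_eq {R : Type*} [Monoid R] {S : Submonoid R}
    [OreLocalization.OreSet S] (q : OreLocalization S R) :
    ∃ (a : R) (s : S), numeratorHom (s : R) * q = numeratorHom a := by
  induction q using OreLocalization.ind with
  | _ a s =>
    exact ⟨a, s, by rw [numeratorHom_apply, numeratorHom_apply, OreLocalization.mul_cancel]⟩

theorem isNoetherianRing_of_forall_exists_mul_eq {A T : Type*} [Ring A] [Ring T]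
    [IsNoetherianRing A] (ψ : A →+* T) (h : ∀ q : T, ∃ a s, IsUnit (ψ s) ∧ ψ s * q = ψ a) :
    IsNoetherianRing T := by
  have comap_le_iff (J J' : Ideal T) : J.comap ψ ≤ J'.comap ψ ↔ J ≤ J' := by
    refine ⟨fun hJ q hq => ?_, Ideal.comap_mono⟩
    obtain ⟨a, s, ⟨u, hu⟩, hsq⟩ := h q
    have ha : ψ a ∈ J' := hJ (Ideal.mem_comap.2 (hsq ▸ J.mul_mem_left _ hq))
    simpa [← hsq, ← hu, ← mul_assoc] using J'.mul_mem_left (↑u⁻¹) ha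
  rw [isNoetherianRing_iff, isNoetherian_iff']
  exact (OrderEmbedding.ofMapLEIff (Ideal.comap ψ) comap_le_iff).wellFoundedGT

/-- For a noetherian (possibly non-commutative) ring `R`, the set
`S_t = { f ∈ R[t] : f(0) ∈ R^× }` consists of left and right non-zero-divisors and satisfies
the left Ore condition, so a left localisation `R[t]_{S_t}` exists and is noetherian. -/
theorem St_is_left_denominator_set (R : Type) [Ring R] [IsNoetherianRing R] :
    (∀ f : R[X], IsUnit (f.coeff 0) →
        (∀ a : R[X], a * f = 0 → a = 0) ∧ (∀ a : R[X], f * a = 0 → a = 0)) ∧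
    (∀ f : R[X], IsUnit (f.coeff 0) → ∀ a : R[X],
        ∃ x : R[X], ∃ y : R[X], IsUnit (y.coeff 0) ∧ x * f = y * a) ∧
    (∃ (T : Type) (_ : Ring T) (ψ : R[X] →+* T),
        IsNoetherianRing T ∧ Function.Injective ψ ∧
        (∀ f : R[X], IsUnit (f.coeff 0) → IsUnit (ψ f)) ∧
        (∀ q : T, ∃ (a f : R[X]), IsUnit (f.coeff 0) ∧ ψ f * q = ψ a)) := by
  have : IsNoetherianRing R[X] := isNoetherianRing_of_ring R
  let S := unitConstantCoeffSubmonoid R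
  have hS : S ≤ nonZeroDivisorsLeft R[X] := fun f hf =>
    (isRegular_of_isUnit_coeff_zero hf).left.mem_nonZeroDivisorsLeft
  have hfrac (q : OreLocalization S R[X]) : ∃ a f : R[X], IsUnit (f.coeff 0) ∧
      OreLocalization.numeratorRingHom f * q = OreLocalization.numeratorRingHom a := by
    obtain ⟨a, f, hfq⟩ := OreLocalization.exists_numeratorHom_mul_eq q
    exact ⟨a, f, f.2, hfq⟩
  refine ⟨fun f hf => ?_, fun f hf a => ?_, OreLocalization S R[X], inferInstance,
    OreLocalization.numeratorRingHom, ?_, OreLocalization.numeratorHom_inj hS,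
    fun f hf => OreLocalization.numerator_isUnit ⟨f, hf⟩, hfrac⟩
  · have hreg := isRegular_of_isUnit_coeff_zero hf
    exact ⟨fun a => hreg.right.mul_right_eq_zero_iff.1,
      fun a => hreg.left.mul_left_eq_zero_iff.1⟩
  · obtain ⟨x, y, hy, hxy⟩ := exists_mul_eq_mul_of_isUnit_coeff_zero hf a
    exact ⟨x, y, hy ▸ isUnit_one, hxy⟩
  · exact isNoetherianRing_of_forall_exists_mul_eq _ fun q =>
      (hfrac q).imp fun a ⟨f, hf, hfq⟩ => ⟨f, OreLocalization.numerator_isUnit ⟨f, hf⟩, hfq⟩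
end

section
/- Let R be a noetherian ring and S_t = { f ∈ R[t] : f(0) ∈ R^× }. Then the Jacobson radical of the localisation R[t]_{S_t} is generated by the Jacobson radical Jac(R) of R together with t; in particular R[t]_{S_t} / Jac(R[t]_{S_t}) ≅ R / Jac(R), and if R is semi-local then so is R[t]_{S_t}. -/
/-!
Every element of `T` has the form `ψ(f)⁻¹ ψ(a)` with `f(0)` a unit, and `1 + q ψ(p)` becomes,
after multiplying by `ψ(f)` on the left, `ψ(f + a p)`, whose constant term is `f(0) + a(0) p(0)`.
Hence `ψ(p)` lies in `Jac(T)` exactly when `p(0)` lies in `Jac(R)`. For the converse, a unit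
`ψ(g)` of `T` has `g(0)` a unit: `ψ(f) = ψ(a) ψ(g)` forces `f = a g`, so `g(0)` has a left
inverse, which suffices because a noetherian ring is Dedekind-finite. Writing
`a = a.divX * t + a(0)` then describes `Jac(T)`, and shows that `R → T/Jac(T)` is surjective
with kernel `Jac(R)`. Maximal left ideals containing the Jacobson radical correspond along this
map, which transfers semi-locality.
-/

open Polynomial

/-- A ring is semi-local if its Jacobson radical is the intersection of finitely many maximal
left ideals; equivalently, the quotient by the Jacobson radical is semisimple. -/
def IsSemilocalRing (R : Type*) [Ring R] : Prop :=
  ∃ s : Finset (Ideal R), (∀ I ∈ s, I.IsMaximal) ∧ (⊥ : Ideal R).jacobson = s.inf id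

namespace Ideal

variable {A B : Type*} [Ring A] [Ring B]

theorem isUnit_one_add_of_mem_jacobson_bot {a : A} (ha : a ∈ (⊥ : Ideal A).jacobson) :
    IsUnit (1 + a) := by
  have leftInv : ∀ b ∈ (⊥ : Ideal A).jacobson, ∃ z, z * (1 + b) = 1 := fun b hb ↦ by
    obtain ⟨z, hz⟩ := exists_mul_add_sub_mem_of_mem_jacobson b hb
    exact ⟨z, by rwa [mem_bot, sub_eq_zero, add_comm] at hz⟩
  obtain ⟨z, hz⟩ := leftInv a ha
  -- `z = 1 + (-z * a)` lies in `1 + Jac(A)` as well, so it too has a left inverse.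
  obtain ⟨w, hw⟩ := leftInv (-z * a) (mul_mem_left _ _ ha)
  have hz' : 1 + -z * a = z := by rw [← hz]; noncomm_ring
  have hzu : IsUnit z := isUnit_iff_exists_and_exists.mpr ⟨⟨1 + a, hz⟩, ⟨w, hz' ▸ hw⟩⟩
  exact (hzu.unit.isUnit_units_mul _).mp (by rw [IsUnit.unit_spec, hz]; exact isUnit_one)

theorem mem_jacobson_bot_iff_forall_isUnit_one_add_mul {x : A} :
    x ∈ (⊥ : Ideal A).jacobson ↔ ∀ y, IsUnit (1 + y * x) := by
  refine ⟨fun hx y ↦ isUnit_one_add_of_mem_jacobson_bot (mul_mem_left _ y hx), fun h ↦ ?_⟩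
  refine mem_jacobson_iff.mpr fun y ↦ ⟨↑(h y).unit⁻¹, ?_⟩
  rw [mem_bot, sub_eq_zero, add_comm, mul_assoc, ← mul_one_add]
  exact (h y).val_inv_mul

theorem comap_jacobson_bot_of_ker_le {f : A →+* B} (hf : Function.Surjective f)
    (hker : RingHom.ker f ≤ (⊥ : Ideal A).jacobson) :
    comap f (⊥ : Ideal B).jacobson = (⊥ : Ideal A).jacobson := by
  rw [comap_jacobson_of_surjective hf, ← RingHom.ker_eq_comap_bot]
  exact le_antisymm ((jacobson_mono hker).trans_eq jacobson_idem) (jacobson_mono bot_le)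

end Ideal

section Semilocal

variable {A B : Type*} [Ring A] [Ring B]

theorem isSemilocalRing_iff_of_surjective {f : A →+* B} (hf : Function.Surjective f)
    (hker : RingHom.ker f ≤ (⊥ : Ideal A).jacobson) :
    IsSemilocalRing A ↔ IsSemilocalRing B := by
  classical
  constructor
  · rintro ⟨s, hmax, hjac⟩
    have hcomap_map : ∀ I ∈ s, (I.map f).comap f = I := fun I hI ↦ by
      rw [Ideal.comap_map_of_surjective f hf, ← RingHom.ker_eq_comap_bot, sup_eq_left]
      exact hker.trans (hjac ▸ Finset.inf_le hI)
    refine ⟨s.image (Ideal.map f), ?_, ?_⟩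
    · simp only [Finset.mem_image]
      rintro _ ⟨I, hI, rfl⟩
      refine (Ideal.map_eq_top_or_isMaximal_of_surjective f hf (hmax I hI)).resolve_left
        fun htop ↦ (hmax I hI).ne_top ?_
      rw [← hcomap_map I hI, htop, Ideal.comap_top]
    · apply Ideal.comap_injective_of_surjective f hf
      rw [Ideal.comap_jacobson_bot_of_ker_le hf hker, hjac, Finset.inf_image,
        Ideal.comap_finsetInf]
      exact Finset.inf_congr rfl fun I hI ↦ (hcomap_map I hI).symm
  · rintro ⟨s, hmax, hjac⟩
    refine ⟨s.image (Ideal.comap f), ?_, ?_⟩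
    · simp only [Finset.mem_image]
      rintro _ ⟨I, hI, rfl⟩
      have := hmax I hI
      exact Ideal.comap_isMaximal_of_surjective f hf
    · rw [← Ideal.comap_jacobson_bot_of_ker_le hf hker, hjac, Finset.inf_image,
        Ideal.comap_finsetInf]
      rfl

theorem isSemilocalRing_iff_of_forall_sub_mem_jacobson (φ : A →+* B)
    (hsurj : ∀ x : B, ∃ r : A, x - φ r ∈ (⊥ : Ideal B).jacobson)
    (hcomap : Ideal.comap φ (⊥ : Ideal B).jacobson = (⊥ : Ideal A).jacobson) :
    IsSemilocalRing A ↔ IsSemilocalRing B := by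
  let π := Ideal.Quotient.mk (⊥ : Ideal B).jacobson
  have hπφ : Function.Surjective (π.comp φ) := fun y ↦ by
    obtain ⟨x, rfl⟩ := Ideal.Quotient.mk_surjective y
    obtain ⟨r, hr⟩ := hsurj x
    exact ⟨r, (Ideal.Quotient.eq.mpr hr).symm⟩
  have hker : RingHom.ker (π.comp φ) = (⊥ : Ideal A).jacobson := by
    rw [← RingHom.comap_ker, Ideal.mk_ker, hcomap]
  exact (isSemilocalRing_iff_of_surjective hπφ hker.le).trans
    (isSemilocalRing_iff_of_surjective Ideal.Quotient.mk_surjective Ideal.mk_ker.le).symm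

end Semilocal

namespace Polynomial

variable {R T : Type*} [Ring R] [Ring T] {ψ : R[X] →+* T}

theorem mem_jacobson_of_coeff_zero_mem_jacobson
    (hunit : ∀ f : R[X], IsUnit (f.coeff 0) → IsUnit (ψ f))
    (hloc : ∀ q : T, ∃ (a f : R[X]), IsUnit (f.coeff 0) ∧ ψ f * q = ψ a) {p : R[X]}
    (hp : p.coeff 0 ∈ (⊥ : Ideal R).jacobson) : ψ p ∈ (⊥ : Ideal T).jacobson := by
  refine Ideal.mem_jacobson_bot_iff_forall_isUnit_one_add_mul.mpr fun q ↦ ?_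
  obtain ⟨a, f, ⟨u, hu⟩, hfa⟩ := hloc q
  have hmul : ψ f * (1 + q * ψ p) = ψ (f + a * p) := by
    rw [map_add, map_mul, mul_one_add, ← mul_assoc, hfa]
  have hcoeff : (f + a * p).coeff 0 = u * (1 + (↑u⁻¹ * a.coeff 0) * p.coeff 0) := by
    rw [coeff_add, mul_coeff_zero, ← hu, mul_one_add, ← mul_assoc, ← mul_assoc, u.mul_inv,
      one_mul]
  have hunit_fa : IsUnit (ψ (f + a * p)) := hunit _ <| by
    rw [hcoeff]
    exact u.isUnit.mul (Ideal.isUnit_one_add_of_mem_jacobson_bot (Ideal.mul_mem_left _ _ hp))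
  rw [← hmul] at hunit_fa
  exact ((hunit f (hu ▸ u.isUnit)).unit.isUnit_units_mul _).mp hunit_fa

theorem isUnit_coeff_zero_of_isUnit [IsDedekindFiniteMonoid R] (hinj : Function.Injective ψ)
    (hloc : ∀ q : T, ∃ (a f : R[X]), IsUnit (f.coeff 0) ∧ ψ f * q = ψ a) {g : R[X]}
    (hg : IsUnit (ψ g)) : IsUnit (g.coeff 0) := by
  obtain ⟨a, f, hf, hfa⟩ := hloc ↑hg.unit⁻¹
  have hf_eq : f = a * g := hinj <| by
    rw [map_mul, ← hfa, mul_assoc, hg.val_inv_mul, mul_one]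
  rw [hf_eq, mul_coeff_zero] at hf
  exact isUnit_of_mul_isUnit_right hf

theorem coeff_zero_mem_jacobson_of_mem_jacobson [IsDedekindFiniteMonoid R]
    (hinj : Function.Injective ψ)
    (hloc : ∀ q : T, ∃ (a f : R[X]), IsUnit (f.coeff 0) ∧ ψ f * q = ψ a) {p : R[X]}
    (hp : ψ p ∈ (⊥ : Ideal T).jacobson) : p.coeff 0 ∈ (⊥ : Ideal R).jacobson := by
  refine Ideal.mem_jacobson_bot_iff_forall_isUnit_one_add_mul.mpr fun y ↦ ?_
  have hunit := Ideal.mem_jacobson_bot_iff_forall_isUnit_one_add_mul.mp hp (ψ (C y))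
  rw [← map_mul, ← map_one ψ, ← map_add] at hunit
  simpa [mul_coeff_zero] using isUnit_coeff_zero_of_isUnit hinj hloc hunit

theorem mem_jacobson_iff_coeff_zero_mem_jacobson [IsDedekindFiniteMonoid R]
    (hinj : Function.Injective ψ) (hunit : ∀ f : R[X], IsUnit (f.coeff 0) → IsUnit (ψ f))
    (hloc : ∀ q : T, ∃ (a f : R[X]), IsUnit (f.coeff 0) ∧ ψ f * q = ψ a) {p : R[X]} :
    ψ p ∈ (⊥ : Ideal T).jacobson ↔ p.coeff 0 ∈ (⊥ : Ideal R).jacobson :=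
  ⟨coeff_zero_mem_jacobson_of_mem_jacobson hinj hloc,
    mem_jacobson_of_coeff_zero_mem_jacobson hunit hloc⟩

theorem exists_sub_C_mem_jacobson (hunit : ∀ f : R[X], IsUnit (f.coeff 0) → IsUnit (ψ f))
    (hloc : ∀ q : T, ∃ (a f : R[X]), IsUnit (f.coeff 0) ∧ ψ f * q = ψ a) (x : T) :
    ∃ r : R, x - ψ (C r) ∈ (⊥ : Ideal T).jacobson := by
  obtain ⟨a, f, ⟨u, hu⟩, hfa⟩ := hloc x
  refine ⟨↑u⁻¹ * a.coeff 0, ?_⟩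
  rw [← Ideal.unit_mul_mem_iff_mem _ (hunit f (hu ▸ u.isUnit)), mul_sub, hfa, ← map_mul,
    ← map_sub]
  refine mem_jacobson_of_coeff_zero_mem_jacobson hunit hloc ?_
  rw [coeff_sub, mul_coeff_zero, coeff_C_zero, ← hu, ← mul_assoc, u.mul_inv, one_mul, sub_self]
  exact zero_mem _

theorem comap_C_jacobson_eq [IsDedekindFiniteMonoid R] (hinj : Function.Injective ψ)
    (hunit : ∀ f : R[X], IsUnit (f.coeff 0) → IsUnit (ψ f))
    (hloc : ∀ q : T, ∃ (a f : R[X]), IsUnit (f.coeff 0) ∧ ψ f * q = ψ a) :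
    Ideal.comap (ψ.comp C) (⊥ : Ideal T).jacobson = (⊥ : Ideal R).jacobson := by
  ext r
  simpa using mem_jacobson_iff_coeff_zero_mem_jacobson hinj hunit hloc (p := C r)

theorem jacobson_eq_span [IsDedekindFiniteMonoid R] (hinj : Function.Injective ψ)
    (hunit : ∀ f : R[X], IsUnit (f.coeff 0) → IsUnit (ψ f))
    (hloc : ∀ q : T, ∃ (a f : R[X]), IsUnit (f.coeff 0) ∧ ψ f * q = ψ a) :
    (⊥ : Ideal T).jacobson =
      Ideal.span ((fun r : R => ψ (C r)) '' ((⊥ : Ideal R).jacobson : Set R) ∪ {ψ X}) := by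
  apply le_antisymm
  · intro x hx
    obtain ⟨a, f, hf, hfa⟩ := hloc x
    have ha0 : a.coeff 0 ∈ (⊥ : Ideal R).jacobson :=
      (mem_jacobson_iff_coeff_zero_mem_jacobson hinj hunit hloc).mp
        (hfa ▸ Ideal.mul_mem_left _ _ hx)
    rw [← Ideal.unit_mul_mem_iff_mem _ (hunit f hf), hfa, ← divX_mul_X_add a, map_add, map_mul]
    exact add_mem (Ideal.mul_mem_left _ _ (Ideal.subset_span (Or.inr rfl)))
      (Ideal.subset_span (Or.inl ⟨_, ha0, rfl⟩))
  · rw [Ideal.span_le]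
    rintro _ (⟨r, hr, rfl⟩ | rfl)
    · exact mem_jacobson_of_coeff_zero_mem_jacobson hunit hloc (by simpa using hr)
    · exact mem_jacobson_of_coeff_zero_mem_jacobson hunit hloc (by simp)

end Polynomial

/-- For a noetherian ring `R` and a left localisation `ψ : R[t] → T` of `R[t]` at
`S_t = {f : f(0) ∈ R^×}`, the Jacobson radical of `T` is generated by `Jac(R)` and `t`;
in particular `T / Jac(T) ≅ R / Jac(R)` (the map `R → T/Jac(T)` is surjective with kernel
`Jac(R)`), and if `R` is semi-local then so is `T`. -/
theorem jacobson_of_localization (R : Type) [Ring R] [IsNoetherianRing R]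
    (T : Type) [Ring T] (ψ : R[X] →+* T)
    (hinj : Function.Injective ψ)
    (hunit : ∀ f : R[X], IsUnit (f.coeff 0) → IsUnit (ψ f))
    (hloc : ∀ q : T, ∃ (a f : R[X]), IsUnit (f.coeff 0) ∧ ψ f * q = ψ a) :
    (⊥ : Ideal T).jacobson =
      Ideal.span ((fun r : R => ψ (C r)) '' ((⊥ : Ideal R).jacobson : Set R) ∪ {ψ X}) ∧
    (∀ x : T, ∃ r : R, x - ψ (C r) ∈ (⊥ : Ideal T).jacobson) ∧
    Ideal.comap (ψ.comp (C : R →+* R[X])) ((⊥ : Ideal T).jacobson) = (⊥ : Ideal R).jacobson ∧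
    (IsSemilocalRing R → IsSemilocalRing T) := by
  have hsurj := exists_sub_C_mem_jacobson hunit hloc
  have hcomap := comap_C_jacobson_eq hinj hunit hloc
  exact ⟨jacobson_eq_span hinj hunit hloc, hsurj, hcomap,
    (isSemilocalRing_iff_of_forall_sub_mem_jacobson (ψ.comp C) hsurj hcomap).mp⟩
end

section
/- Let Λ be a finite ring and Λ[[t]] the power series ring in one central variable. Let ∂ : P → Q be a homomorphism of finitely generated projective Λ[[t]]-modules such that P and Q are isomorphic as Λ[[t]]-modules and coker(∂) is finite. Then ∂ is injective. -/
/-!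
Transporting `∂` along `P ≃ Q` gives an endomorphism `d` of `P` with finite cokernel. The quotients
`P ⧸ XⁿP` are finite because `Λ` is, so the endomorphisms `dₙ` they inherit from `d` satisfy
`|ker dₙ| = |coker dₙ| ≤ |coker d|`. The image of `K = ker d` in `P ⧸ XⁿP` lies in `ker dₙ`, so the
subgroups `K ∩ XⁿP` have index in `K` bounded independently of `n`; being decreasing, they
stabilise. A projective module embeds in a free one, so `⋂ₙ XⁿP = 0`, hence `K ∩ X^{n₀}P = 0` for
some `n₀`. Then `X^{n₀} K = 0`, and `X^{n₀}` is a nonzerodivisor on `P`, so `K = 0`.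
-/

open PowerSeries Function

namespace AddSubgroup

variable {G : Type*} [AddGroup G]

theorem exists_le_iInf_of_antitone_of_index_le {H : ℕ → AddSubgroup G} (hH : Antitone H)
    [∀ n, (H n).FiniteIndex] {c : ℕ} (hc : ∀ n, (H n).index ≤ c) : ∃ n₀, H n₀ ≤ ⨅ n, H n := by
  obtain ⟨n₀, hn₀⟩ : ∃ n₀, ∀ m, (H m).index ≤ (H n₀).index := by
    have hbdd : BddAbove (Set.range fun n => (H n).index) := ⟨c, by rintro _ ⟨n, rfl⟩; exact hc n⟩
    obtain ⟨n₀, hn₀⟩ := Nat.sSup_mem (Set.range_nonempty _) hbdd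
    exact ⟨n₀, fun m => (le_csSup hbdd ⟨m, rfl⟩).trans_eq hn₀.symm⟩
  refine ⟨n₀, le_iInf fun m => ?_⟩
  rcases le_total m n₀ with hm | hm
  · exact hH hm
  · refine (eq_of_le_of_not_lt (hH hm) fun hlt => ?_).ge
    exact (index_strictAnti hlt).not_ge (hn₀ m)

end AddSubgroup

namespace AddMonoidHom

theorem card_ker_eq_index_range {A : Type*} [AddGroup A] [Finite A] (f : A →+ A) :
    Nat.card f.ker = f.range.index := by
  have hker := f.ker.card_mul_index
  have hrange := f.range.card_mul_index
  rw [AddSubgroup.index_ker] at hker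
  exact Nat.eq_of_mul_eq_mul_right Nat.card_pos (hker.trans (hrange.symm.trans (mul_comm _ _)))

theorem relIndex_ker_le_index_range {A : Type*} [AddCommGroup A] (f : A →+ A)
    {N : AddSubgroup A} [N.FiniteIndex] [f.range.FiniteIndex] (hN : N ≤ N.comap f) :
    N.relIndex f.ker ≤ f.range.index := by
  have : Finite (A ⧸ N) := AddSubgroup.finite_quotient_of_finiteIndex
  let fbar : A ⧸ N →+ A ⧸ N := QuotientAddGroup.map N N f hN
  have hrange : fbar.range = f.range.map (QuotientAddGroup.mk' N) := by
    ext y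
    constructor
    · rintro ⟨z, rfl⟩
      obtain ⟨x, rfl⟩ := QuotientAddGroup.mk'_surjective N z
      exact ⟨f x, ⟨x, rfl⟩, rfl⟩
    · rintro ⟨_, ⟨x, rfl⟩, rfl⟩
      exact ⟨x, rfl⟩
  calc N.relIndex f.ker = Nat.card ((QuotientAddGroup.mk' N).comp f.ker.subtype).range := by
        rw [AddSubgroup.relIndex, AddSubgroup.addSubgroupOf, ← AddSubgroup.index_ker, ← comap_ker,
          QuotientAddGroup.ker_mk']
    _ ≤ Nat.card fbar.ker := by
        refine AddSubgroup.card_le_of_le ?_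
        rintro _ ⟨⟨x, hx⟩, rfl⟩
        rw [AddMonoidHom.mem_ker] at hx ⊢
        simp [fbar, hx]
    _ = fbar.range.index := card_ker_eq_index_range fbar
    _ ≤ f.range.index := by
        rw [hrange]
        exact Nat.le_of_dvd (Nat.pos_of_ne_zero AddSubgroup.FiniteIndex.index_ne_zero)
          (AddSubgroup.index_map_dvd _ (QuotientAddGroup.mk'_surjective N))

end AddMonoidHom

instance Submodule.finiteIndex_toAddSubgroup {R M : Type*} [Ring R] [AddCommGroup M] [Module R M]
    (N : Submodule R M) [Finite (M ⧸ N)] : N.toAddSubgroup.FiniteIndex :=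
  @AddSubgroup.finiteIndex_of_finite_quotient _ _ _ (inferInstanceAs (Finite (M ⧸ N)))

namespace PowerSeries

variable {R : Type*} [Ring R]

theorem X_pow_mem_center (n : ℕ) : (X ^ n : R⟦X⟧) ∈ Set.center R⟦X⟧ :=
  Semigroup.mem_center_iff.mpr fun φ => (commute_X_pow φ n).eq

variable (R) (M : Type*) [AddCommGroup M] [Module R⟦X⟧ M]

noncomputable def xAdicFiltration (n : ℕ) : Submodule R⟦X⟧ M :=
  LinearMap.range (Module.End.smulLeft (X ^ n) (X_pow_mem_center n))

variable {R M}

theorem X_pow_smul_mem_xAdicFiltration (n : ℕ) (x : M) :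
    (X ^ n : R⟦X⟧) • x ∈ xAdicFiltration R M n :=
  ⟨x, rfl⟩

theorem xAdicFiltration_antitone : Antitone (xAdicFiltration R M) := by
  rintro n m hnm _ ⟨x, rfl⟩
  refine ⟨(X ^ (m - n) : R⟦X⟧) • x, ?_⟩
  simp only [Module.End.smulLeft_apply, smul_smul, ← pow_add, Nat.add_sub_cancel' hnm]

theorem xAdicFiltration_le_comap {N : Type*} [AddCommGroup N] [Module R⟦X⟧ N]
    (f : M →ₗ[R⟦X⟧] N) (n : ℕ) : xAdicFiltration R M n ≤ (xAdicFiltration R N n).comap f := by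
  rintro _ ⟨x, rfl⟩
  exact ⟨f x, (map_smul f _ x).symm⟩

/- `M ⧸ XⁿM` is a quotient of some `R⟦X⟧ᵏ`, in which the class of `c` only depends on the
coefficients of degree `< n` of the entries of `c`. -/
instance [Finite R] [Module.Finite R⟦X⟧ M] (n : ℕ) : Finite (M ⧸ xAdicFiltration R M n) := by
  obtain ⟨k, π, hπ⟩ := Module.Finite.exists_fin' R⟦X⟧ M
  let coeffs : (Fin k → R⟦X⟧) →+ (Fin k → Fin n → R) :=
    AddMonoidHom.mk' (fun c i j => coeff j (c i)) fun _ _ => by ext; simp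
  let φ : (Fin k → R⟦X⟧) →+ M ⧸ xAdicFiltration R M n :=
    ((xAdicFiltration R M n).mkQ ∘ₗ π).toAddMonoidHom
  have hker : coeffs.ker ≤ φ.ker := by
    intro c hc
    choose g hg using fun i =>
      X_pow_dvd_iff.mpr fun j hj => congr_fun (congr_fun hc i) ⟨j, hj⟩
    have hc : c = (X ^ n : R⟦X⟧) • g := funext hg
    rw [AddMonoidHom.mem_ker, hc, LinearMap.toAddMonoidHom_coe, LinearMap.comp_apply, map_smul,
      Submodule.mkQ_apply, Submodule.Quotient.mk_eq_zero]
    exact X_pow_smul_mem_xAdicFiltration (R := R) n (π g)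
  have : Finite ((Fin k → R⟦X⟧) ⧸ coeffs.ker) :=
    .of_injective _ (QuotientAddGroup.kerLift_injective coeffs)
  refine .of_surjective (QuotientAddGroup.lift _ φ hker) fun y => ?_
  obtain ⟨c, rfl⟩ := ((xAdicFiltration R M n).mkQ_surjective.comp hπ) y
  exact ⟨c, rfl⟩

variable [Module.Projective R⟦X⟧ M]

theorem isSMulRegular_X_pow (n : ℕ) : IsSMulRegular M (X ^ n : R⟦X⟧) := by
  obtain ⟨s, hs⟩ := Module.projective_def.mp ‹Module.Projective R⟦X⟧ M›
  exact .of_injective s hs.injective (isLeftRegular_iff.mp X_pow_mul_injective).finsupp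

theorem iInf_xAdicFiltration_eq_bot : ⨅ n, xAdicFiltration R M n = (⊥ : Submodule R⟦X⟧ M) := by
  obtain ⟨s, hs⟩ := Module.projective_def.mp ‹Module.Projective R⟦X⟧ M›
  refine eq_bot_iff.mpr fun x hx => hs.injective ?_
  rw [map_zero]
  ext i k
  obtain ⟨y, rfl⟩ := (Submodule.mem_iInf _).mp hx (k + 1)
  simp [coeff_X_pow_mul']

theorem injective_of_finite_quotient_range [Finite R] [Module.Finite R⟦X⟧ M]
    (d : M →ₗ[R⟦X⟧] M) [Finite (M ⧸ LinearMap.range d)] : Injective d := by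
  let f := d.toAddMonoidHom
  have : f.range.FiniteIndex := by
    rw [← LinearMap.range_toAddSubgroup]
    infer_instance
  let H n := (xAdicFiltration R M n).toAddSubgroup.addSubgroupOf f.ker
  have hH : Antitone H := fun n m hnm =>
    AddSubgroup.addSubgroupOf_mono _ (xAdicFiltration_antitone hnm)
  have hbound n : (H n).index ≤ f.range.index :=
    f.relIndex_ker_le_index_range (xAdicFiltration_le_comap d n)
  obtain ⟨n₀, hn₀⟩ := AddSubgroup.exists_le_iInf_of_antitone_of_index_le hH hbound
  rw [injective_iff_map_eq_zero]
  intro x hx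
  have hsmul : (X ^ n₀ : R⟦X⟧) • x = 0 := by
    have hmem : (X ^ n₀ : R⟦X⟧) • x ∈ ⨅ n, xAdicFiltration R M n := by
      refine (Submodule.mem_iInf _).mpr fun m => ?_
      have hmem₀ : ⟨(X ^ n₀ : R⟦X⟧) • x, by simp [f, hx]⟩ ∈ H n₀ :=
        X_pow_smul_mem_xAdicFiltration n₀ x
      exact AddSubgroup.mem_iInf.mp (hn₀ hmem₀) m
    rwa [iInf_xAdicFiltration_eq_bot] at hmem
  exact (isSMulRegular_X_pow n₀).right_eq_zero_of_smul hsmul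

end PowerSeries

theorem injective_of_finite_coker_general (Λ : Type*) [Ring Λ] [Finite Λ]
    (P Q : Type*) [AddCommGroup P] [AddCommGroup Q]
    [Module (PowerSeries Λ) P] [Module (PowerSeries Λ) Q]
    [Module.Finite (PowerSeries Λ) P] [Module.Projective (PowerSeries Λ) P]
    (hiso : Nonempty (P ≃ₗ[PowerSeries Λ] Q))
    (d : P →ₗ[PowerSeries Λ] Q)
    (hcoker : Finite (Q ⧸ LinearMap.range d)) :
    Function.Injective d := by
  obtain ⟨e⟩ := hiso
  have : Finite (P ⧸ LinearMap.range (e.symm.toLinearMap ∘ₗ d)) := by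
    rw [LinearMap.range_comp]
    exact .of_equiv _ (Submodule.Quotient.equiv _ _ e.symm rfl).toEquiv
  exact fun a b hab =>
    PowerSeries.injective_of_finite_quotient_range (e.symm.toLinearMap ∘ₗ d) (by simp [hab])

/-- Let `Λ` be a finite ring and `∂ : P → Q` a homomorphism of finitely generated projective
`Λ[[t]]`-modules such that `P` and `Q` are isomorphic as `Λ[[t]]`-modules and `coker ∂` is
finite.  Then `∂` is injective. -/
theorem injective_of_finite_coker (Λ : Type*) [Ring Λ] [Finite Λ]
    (P Q : Type*) [AddCommGroup P] [AddCommGroup Q]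
    [Module (PowerSeries Λ) P] [Module (PowerSeries Λ) Q]
    [Module.Finite (PowerSeries Λ) P] [Module.Projective (PowerSeries Λ) P]
    [Module.Finite (PowerSeries Λ) Q] [Module.Projective (PowerSeries Λ) Q]
    (hiso : Nonempty (P ≃ₗ[PowerSeries Λ] Q))
    (d : P →ₗ[PowerSeries Λ] Q)
    (hcoker : Finite (Q ⧸ LinearMap.range d)) :
    Function.Injective d :=
  injective_of_finite_coker_general Λ P Q hiso d hcoker
end

section
/- Let Λ be a ring, G = H ⋊ Γ with Γ infinite cyclic generated by γ, and let f := t^n + Σ_{i=0}^{n-1} λ_i t^i ∈ Λ[G] be a monic polynomial in t := γ − 1 of degree n with coefficients λ_i ∈ Jac(Λ[H]). Then M := Λ[G]/Λ[G]f is finitely generated and free as a Λ[H]-module, with basis given by the residue classes of 1, t, …, t^{n-1}. -/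
/-!
Write `Λ[G]` as the skew Laurent ring `Λ[H][γ, γ⁻¹; σ]`: every element is uniquely
`∑ ι(a_k) γ^k` with coefficients on the left, and `γ ι(r) = ι(σ r) γ`.

The classes of `1, t, …, t^{n-1}` span `Λ[G]/Λ[G]f`: their `Λ[H]`-span contains `t^n`
(reduce by `f`), so it is stable under `t` and `γ = 1 + t`, hence under every element of
nonnegative `γ`-degree. It is also stable under `γ⁻¹`: the constant coefficient
`(-1)^n + ∑ (-1)^i λ_i` of `f` is a unit because the `λ_i` lie in the Jacobson radical, so the
relation `γ⁻¹ f ≡ 0` writes the class of `γ⁻¹` through elements of nonnegative degree.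

They are independent: if `a f` has `γ`-degrees in `[0, n)` and `a ≠ 0`, then, since `f` has
unit coefficients in degrees `n` and `0`, the top degree of `a f` is that of `a` plus `n` and
its bottom degree is that of `a`, so the top degree of `a` would be negative and its bottom
degree nonnegative.
-/

open Multiplicative SemidirectProduct
open scoped MonoidAlgebra

theorem isUnit_one_add_of_mem_jacobson_bot {R : Type*} [Ring R] {x : R}
    (hx : x ∈ (⊥ : Ideal R).jacobson) : IsUnit (1 + x) := by
  have left_inv : ∀ y ∈ (⊥ : Ideal R).jacobson, ∃ z, z * (1 + y) = 1 := fun y hy ↦ by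
    obtain ⟨z, hz⟩ := Ideal.mem_jacobson_iff.mp hy 1
    rw [Ideal.mem_bot, mul_one, sub_eq_zero] at hz
    exact ⟨z, by rw [mul_one_add, add_comm, hz]⟩
  obtain ⟨z, hz⟩ := left_inv x hx
  -- `z = 1 - z x` is itself of the form `1 + y` with `y` in the radical
  have hz' : z = 1 + -(z * x) := by rw [← hz]; noncomm_ring
  obtain ⟨w, hw⟩ := left_inv _ (neg_mem (Ideal.mul_mem_left _ z hx))
  rw [← hz'] at hw
  have hwx : w = 1 + x := calc
    w = w * (z * (1 + x)) := by rw [hz, mul_one]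
    _ = 1 + x := by rw [← mul_assoc, hw, one_mul]
  exact isUnit_iff_exists_and_exists.mpr ⟨⟨z, by rw [← hwx, hw]⟩, ⟨z, hz⟩⟩

theorem isUnit_add_of_mem_jacobson_bot {R : Type*} [Ring R] {u x : R} (hu : IsUnit u)
    (hx : x ∈ (⊥ : Ideal R).jacobson) : IsUnit (u + x) := by
  obtain ⟨u, rfl⟩ := hu
  have : (u : R) + x = u * (1 + ↑u⁻¹ * x) := by rw [mul_add, mul_one, Units.mul_inv_cancel_left]
  rw [this]
  exact u.isUnit.mul (isUnit_one_add_of_mem_jacobson_bot (Ideal.mul_mem_left _ _ hx))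

section SmulStabilizer

variable {R A M : Type*} [Ring R] [Ring A] [AddCommGroup M] [Module A M] [Module R M]

variable (A) in
def smulStabilizer (W : Submodule R M) : Subring A where
  carrier := {a | ∀ w ∈ W, a • w ∈ W}
  mul_mem' ha hb w hw := by rw [mul_smul]; exact ha _ (hb w hw)
  one_mem' w hw := by rwa [one_smul]
  add_mem' ha hb w hw := by rw [add_smul]; exact add_mem (ha w hw) (hb w hw)
  zero_mem' w _ := by rw [zero_smul]; exact zero_mem W
  neg_mem' ha w hw := by rw [neg_smul]; exact neg_mem (ha w hw)

theorem mem_smulStabilizer_span {ι : R →+* A} (hsmul : ∀ (r : R) (m : M), r • m = ι r • m)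
    {κ : Type*} {v : κ → M} {a : A} (hcomm : ∀ r, ∃ r' r'', a * ι r = ι r' * a + ι r'')
    (hv : ∀ i, a • v i ∈ Submodule.span R (Set.range v)) :
    a ∈ smulStabilizer A (Submodule.span R (Set.range v)) := by
  intro w hw
  induction hw using Submodule.span_induction with
  | mem x hx => obtain ⟨i, rfl⟩ := hx; exact hv i
  | zero => rw [smul_zero]; exact zero_mem _
  | add x y _ _ hx hy => rw [smul_add]; exact add_mem hx hy
  | smul r x hx hax =>
    obtain ⟨r', r'', h⟩ := hcomm r
    rw [hsmul, ← mul_smul, h, add_smul, mul_smul, ← hsmul, ← hsmul]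
    exact add_mem (Submodule.smul_mem _ _ hax) (Submodule.smul_mem _ _ hx)

end SmulStabilizer

namespace SkewLaurent

variable {Λ : Type*} [Ring Λ] {H : Type*} [Group H] (φ : Multiplicative ℤ →* MulAut H)

noncomputable def incl : Λ[H] →+* Λ[H ⋊[φ] Multiplicative ℤ] :=
  MonoidAlgebra.mapDomainRingHom Λ inl

noncomputable def gamma (k : ℤ) : Λ[H ⋊[φ] Multiplicative ℤ] :=
  MonoidAlgebra.single (inr (ofAdd k)) 1

noncomputable def twist (k : ℤ) : Λ[H] →+* Λ[H] :=
  MonoidAlgebra.mapDomainRingHom Λ (φ (ofAdd k))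

noncomputable def coeff (z : ℤ) : Λ[H ⋊[φ] Multiplicative ℤ] →+ Λ[H] :=
  MonoidAlgebra.coeffAddEquiv.symm.toAddMonoidHom.comp <|
    (Finsupp.comapDomain.addMonoidHom (f := fun h ↦ (⟨h, ofAdd z⟩ : H ⋊[φ] Multiplicative ℤ))
      fun _ _ h ↦ congrArg left h).comp MonoidAlgebra.coeffAddEquiv.toAddMonoidHom

variable {φ}

theorem coeff_coeff (z : ℤ) (a : Λ[H ⋊[φ] Multiplicative ℤ]) (h : H) :
    (coeff φ z a).coeff h = a.coeff ⟨h, ofAdd z⟩ := rfl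

theorem ext_coeff {a b : Λ[H ⋊[φ] Multiplicative ℤ]} (h : ∀ z, coeff φ z a = coeff φ z b) :
    a = b := by
  ext ⟨h', z⟩
  simpa [coeff_coeff] using congrArg (·.coeff h') (h (toAdd z))

theorem coeff_single (z : ℤ) (g : H ⋊[φ] Multiplicative ℤ) (c : Λ) :
    coeff φ z (MonoidAlgebra.single g c) =
      if g.right = ofAdd z then MonoidAlgebra.single g.left c else 0 := by
  classical
  ext h
  by_cases hg : g.right = ofAdd z <;>
    simp [coeff_coeff, hg, Finsupp.single_apply, SemidirectProduct.ext_iff]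

theorem twist_single (k : ℤ) (h : H) (c : Λ) :
    twist φ k (MonoidAlgebra.single h c) = MonoidAlgebra.single (φ (ofAdd k) h) c := by
  simp [twist]

theorem incl_single (h : H) (c : Λ) :
    incl φ (MonoidAlgebra.single h c) = MonoidAlgebra.single (inl h) c := by
  simp [incl]

theorem gamma_zero : gamma φ 0 = (1 : Λ[H ⋊[φ] Multiplicative ℤ]) := by
  simp [gamma, MonoidAlgebra.one_def]

theorem gamma_add (j k : ℤ) :
    gamma φ (j + k) = (gamma φ j * gamma φ k : Λ[H ⋊[φ] Multiplicative ℤ]) := by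
  simp [gamma, MonoidAlgebra.single_mul_single, ofAdd_add]

theorem coeff_gamma (z w : ℤ) :
    coeff φ z (gamma φ w : Λ[H ⋊[φ] Multiplicative ℤ]) = if z = w then 1 else 0 := by
  simp [gamma, coeff_single, eq_comm, MonoidAlgebra.one_def]

theorem coeff_incl_mul (z : ℤ) (r : Λ[H]) (a : Λ[H ⋊[φ] Multiplicative ℤ]) :
    coeff φ z (incl φ r * a) = r * coeff φ z a := by
  induction r using MonoidAlgebra.induction_linear with
  | zero => simp
  | add r s hr hs => simp [add_mul, hr, hs]
  | single h c =>
    ext h'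
    simp [incl_single, coeff_coeff, mul_assoc]

theorem coeff_gamma_mul (z w : ℤ) (a : Λ[H ⋊[φ] Multiplicative ℤ]) :
    coeff φ z (gamma φ w * a) = twist φ w (coeff φ (z - w) a) := by
  induction a using MonoidAlgebra.induction_linear with
  | zero => simp
  | add a b ha hb => simp [mul_add, ha, hb]
  | single g c =>
    rw [gamma, MonoidAlgebra.single_mul_single, one_mul, coeff_single, coeff_single]
    have hright : ofAdd w * g.right = ofAdd z ↔ g.right = ofAdd (z - w) := by
      rw [ofAdd_sub, eq_div_iff_mul_eq', mul_comm]
    simp only [mul_right, mul_left, right_inr, left_inr, hright]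
    split_ifs <;> simp [twist_single]

theorem coeff_one (z : ℤ) :
    coeff φ z (1 : Λ[H ⋊[φ] Multiplicative ℤ]) = if z = 0 then 1 else 0 := by
  rw [← gamma_zero, coeff_gamma]

theorem coeff_incl (z : ℤ) (r : Λ[H]) :
    coeff φ z (incl φ r) = if z = 0 then r else 0 := by
  rw [← mul_one (incl φ r), coeff_incl_mul, coeff_one]
  split_ifs <;> simp

theorem gamma_mul_incl (w : ℤ) (r : Λ[H]) :
    gamma φ w * incl φ r = incl φ (twist φ w r) * gamma φ w := by
  refine ext_coeff fun z ↦ ?_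
  rw [coeff_gamma_mul, coeff_incl_mul, coeff_incl, coeff_gamma]
  simp only [sub_eq_zero]
  split_ifs <;> simp

variable (φ) in
noncomputable def support (a : Λ[H ⋊[φ] Multiplicative ℤ]) : Finset ℤ :=
  a.coeff.support.image fun g ↦ toAdd g.right

theorem mem_support {a : Λ[H ⋊[φ] Multiplicative ℤ]} {z : ℤ} :
    z ∈ support φ a ↔ coeff φ z a ≠ 0 := by
  constructor
  · rintro hz h0
    obtain ⟨g, hg, rfl⟩ := Finset.mem_image.mp hz
    exact Finsupp.mem_support_iff.mp hg (by simpa [coeff_coeff] using congrArg (·.coeff g.left) h0)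
  · intro hz
    obtain ⟨h, hh⟩ : ∃ h, (coeff φ z a).coeff h ≠ 0 := by
      by_contra! h0
      exact hz (by ext h; simpa using h0 h)
    exact Finset.mem_image.mpr ⟨⟨h, ofAdd z⟩, Finsupp.mem_support_iff.mpr hh, rfl⟩

theorem notMem_support {a : Λ[H ⋊[φ] Multiplicative ℤ]} {z : ℤ} :
    z ∉ support φ a ↔ coeff φ z a = 0 :=
  mem_support.not_left

theorem sum_incl_coeff_mul_gamma (a : Λ[H ⋊[φ] Multiplicative ℤ]) :
    ∑ k ∈ support φ a, incl φ (coeff φ k a) * gamma φ k = a := by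
  refine ext_coeff fun z ↦ ?_
  simp only [map_sum, coeff_incl_mul, coeff_gamma, mul_ite, mul_one, mul_zero,
    Finset.sum_ite_eq]
  split_ifs with hz
  · rfl
  · exact (notMem_support.mp hz).symm

theorem coeff_mul (z : ℤ) (a b : Λ[H ⋊[φ] Multiplicative ℤ]) :
    coeff φ z (a * b) = ∑ j ∈ support φ a, coeff φ j a * twist φ j (coeff φ (z - j) b) := by
  conv_lhs => rw [← sum_incl_coeff_mul_gamma a]
  simp only [Finset.sum_mul, map_sum, mul_assoc, coeff_incl_mul, coeff_gamma_mul]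

variable (φ) in
def supportedIn (s : Set ℤ) : AddSubgroup Λ[H ⋊[φ] Multiplicative ℤ] where
  carrier := {a | ∀ z ∉ s, coeff φ z a = 0}
  add_mem' ha hb z hz := by rw [map_add, ha z hz, hb z hz, add_zero]
  zero_mem' z _ := map_zero _
  neg_mem' ha z hz := by rw [map_neg, ha z hz, neg_zero]

theorem supportedIn_mono {s s' : Set ℤ} (h : s ⊆ s') :
    supportedIn (Λ := Λ) φ s ≤ supportedIn φ s' :=
  fun _ ha z hz ↦ ha z (fun hs ↦ hz (h hs))

theorem incl_mul_mem_supportedIn {s : Set ℤ} (r : Λ[H]) {a : Λ[H ⋊[φ] Multiplicative ℤ]}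
    (ha : a ∈ supportedIn φ s) : incl φ r * a ∈ supportedIn φ s := fun z hz ↦ by
  rw [coeff_incl_mul, ha z hz, mul_zero]

theorem mem_supportedIn_Icc_min'_max' {a : Λ[H ⋊[φ] Multiplicative ℤ]}
    (ha : (support φ a).Nonempty) :
    a ∈ supportedIn φ (Set.Icc ((support φ a).min' ha) ((support φ a).max' ha)) :=
  fun z hz ↦ by
    by_contra h
    exact hz ⟨Finset.min'_le _ _ (mem_support.mpr h), Finset.le_max' _ _ (mem_support.mpr h)⟩

theorem coeff_add_mul_of_le {a b : Λ[H ⋊[φ] Multiplicative ℤ]} {K N : ℤ}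
    (ha : a ∈ supportedIn φ (Set.Iic K)) (hb : b ∈ supportedIn φ (Set.Iic N)) :
    coeff φ (K + N) (a * b) = coeff φ K a * twist φ K (coeff φ N b) := by
  rw [coeff_mul, Finset.sum_eq_single K]
  · rw [add_sub_cancel_left]
  · intro j hj hjK
    have hjle : j ≤ K := by_contra fun h ↦ mem_support.mp hj (ha j h)
    rw [hb (K + N - j) (by rw [Set.mem_Iic]; omega), map_zero, mul_zero]
  · intro hK
    rw [notMem_support.mp hK, zero_mul]

theorem coeff_add_mul_of_ge {a b : Λ[H ⋊[φ] Multiplicative ℤ]} {m N : ℤ}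
    (ha : a ∈ supportedIn φ (Set.Ici m)) (hb : b ∈ supportedIn φ (Set.Ici N)) :
    coeff φ (m + N) (a * b) = coeff φ m a * twist φ m (coeff φ N b) := by
  rw [coeff_mul, Finset.sum_eq_single m]
  · rw [add_sub_cancel_left]
  · intro j hj hjm
    have hjge : m ≤ j := by_contra fun h ↦ mem_support.mp hj (ha j h)
    rw [hb (m + N - j) (by rw [Set.mem_Ici]; omega), map_zero, mul_zero]
  · intro hm
    rw [notMem_support.mp hm, zero_mul]

theorem support_nonempty {a : Λ[H ⋊[φ] Multiplicative ℤ]} (ha : a ≠ 0) :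
    (support φ a).Nonempty := by
  rw [Finset.nonempty_iff_ne_empty]
  intro h
  rw [← sum_incl_coeff_mul_gamma a, h, Finset.sum_empty] at ha
  exact ha rfl

theorem eq_zero_of_mul_mem_supportedIn_Ico {a b : Λ[H ⋊[φ] Multiplicative ℤ]} {N : ℤ}
    (hb : b ∈ supportedIn φ (Set.Icc 0 N)) (hN : IsUnit (coeff φ N b))
    (h0 : IsUnit (coeff φ 0 b)) (hab : a * b ∈ supportedIn φ (Set.Ico 0 N)) : a = 0 := by
  by_contra ha
  have hne := support_nonempty ha
  set m := (support φ a).min' hne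
  set K := (support φ a).max' hne
  have hsupp : a ∈ supportedIn φ (Set.Icc m K) := mem_supportedIn_Icc_min'_max' hne
  have htop : coeff φ (K + N) (a * b) ≠ 0 := by
    rw [coeff_add_mul_of_le (supportedIn_mono Set.Icc_subset_Iic_self hsupp)
      (supportedIn_mono Set.Icc_subset_Iic_self hb), Ne, (hN.map (twist φ K)).mul_left_eq_zero]
    exact mem_support.mp (Finset.max'_mem _ _)
  have hbot : coeff φ (m + 0) (a * b) ≠ 0 := by
    rw [coeff_add_mul_of_ge (supportedIn_mono Set.Icc_subset_Ici_self hsupp)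
      (supportedIn_mono Set.Icc_subset_Ici_self hb), Ne, (h0.map (twist φ m)).mul_left_eq_zero]
    exact mem_support.mp (Finset.min'_mem _ _)
  have hK : K + N ∈ Set.Ico 0 N := by_contra fun h ↦ htop (hab _ h)
  have hm : m + 0 ∈ Set.Ico 0 N := by_contra fun h ↦ hbot (hab _ h)
  have hmK : m ≤ K := Finset.min'_le_max' _ hne
  simp only [Set.mem_Ico] at hK hm
  omega

theorem coeff_gamma_one_sub_one_mul (z : ℤ) (a : Λ[H ⋊[φ] Multiplicative ℤ]) :
    coeff φ z ((gamma φ 1 - 1) * a) = twist φ 1 (coeff φ (z - 1) a) - coeff φ z a := by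
  rw [sub_mul, one_mul, map_sub, coeff_gamma_mul]

theorem gamma_one_sub_one_pow_mem_supportedIn (i : ℕ) :
    (gamma φ 1 - 1 : Λ[H ⋊[φ] Multiplicative ℤ]) ^ i ∈ supportedIn φ (Set.Icc 0 i) := by
  induction i with
  | zero =>
    intro z hz
    rw [pow_zero, coeff_one, if_neg (by rintro rfl; simp at hz)]
  | succ i ih =>
    intro z hz
    simp only [Set.mem_Icc, not_and_or, not_le] at hz
    rw [pow_succ', coeff_gamma_one_sub_one_mul, ih (z - 1) (by simp; omega),
      ih z (by simp; omega), map_zero, sub_zero]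

theorem coeff_gamma_one_sub_one_pow_self (i : ℕ) :
    coeff φ i ((gamma φ 1 - 1 : Λ[H ⋊[φ] Multiplicative ℤ]) ^ i) = 1 := by
  induction i with
  | zero => simp [coeff_one]
  | succ i ih =>
    rw [pow_succ', coeff_gamma_one_sub_one_mul, Nat.cast_succ, add_sub_cancel_right, ih,
      map_one, gamma_one_sub_one_pow_mem_supportedIn i (i + 1) (by simp), sub_zero]

theorem coeff_zero_gamma_one_sub_one_pow (i : ℕ) :
    coeff φ 0 ((gamma φ 1 - 1 : Λ[H ⋊[φ] Multiplicative ℤ]) ^ i) = (-1) ^ i := by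
  induction i with
  | zero => simp [coeff_one]
  | succ i ih =>
    rw [pow_succ', coeff_gamma_one_sub_one_mul, gamma_one_sub_one_pow_mem_supportedIn i (0 - 1)
      (by simp), map_zero, zero_sub, ih, pow_succ', neg_one_mul]

theorem gamma_natCast (k : ℕ) :
    gamma φ k = (gamma φ 1 : Λ[H ⋊[φ] Multiplicative ℤ]) ^ k := by
  induction k with
  | zero => exact gamma_zero
  | succ k ih => rw [Nat.cast_succ, gamma_add, ih, pow_succ]

theorem gamma_neg_natCast (k : ℕ) :
    gamma φ (-k) = (gamma φ (-1) : Λ[H ⋊[φ] Multiplicative ℤ]) ^ k := by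
  induction k with
  | zero => simpa using gamma_zero
  | succ k ih => rw [Nat.cast_succ, neg_add, gamma_add, ih, pow_succ]

theorem mem_of_forall_gamma_mem {S : Subring Λ[H ⋊[φ] Multiplicative ℤ]}
    (hincl : ∀ r, incl φ r ∈ S) {a : Λ[H ⋊[φ] Multiplicative ℤ]}
    (ha : ∀ k ∈ support φ a, gamma φ k ∈ S) : a ∈ S := by
  rw [← sum_incl_coeff_mul_gamma a]
  exact sum_mem fun k hk ↦ mul_mem (hincl _) (ha k hk)

theorem mem_of_mem_supportedIn_Ici_zero {S : Subring Λ[H ⋊[φ] Multiplicative ℤ]}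
    (hincl : ∀ r, incl φ r ∈ S) (hγ : gamma φ 1 ∈ S) {a : Λ[H ⋊[φ] Multiplicative ℤ]}
    (ha : a ∈ supportedIn φ (Set.Ici 0)) : a ∈ S := by
  refine mem_of_forall_gamma_mem hincl fun k hk ↦ ?_
  have hk0 : 0 ≤ k := by_contra fun h ↦ mem_support.mp hk (ha k h)
  rw [← Int.toNat_of_nonneg hk0, gamma_natCast]
  exact pow_mem hγ _

theorem eq_top_of_gamma_mem {S : Subring Λ[H ⋊[φ] Multiplicative ℤ]}
    (hincl : ∀ r, incl φ r ∈ S) (hγ : gamma φ 1 ∈ S) (hγinv : gamma φ (-1) ∈ S) : S = ⊤ := by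
  refine eq_top_iff.mpr fun a _ ↦ mem_of_forall_gamma_mem hincl fun k _ ↦ ?_
  obtain ⟨k, rfl | rfl⟩ := Int.eq_nat_or_neg k
  · rw [gamma_natCast]; exact pow_mem hγ _
  · rw [gamma_neg_natCast]; exact pow_mem hγinv _

theorem gamma_neg_one_mul_sub_mem_supportedIn {x : Λ[H ⋊[φ] Multiplicative ℤ]}
    (hx : x ∈ supportedIn φ (Set.Ici 0)) :
    gamma φ (-1) * x - incl φ (twist φ (-1) (coeff φ 0 x)) * gamma φ (-1) ∈
      supportedIn φ (Set.Ici 0) := by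
  rw [← gamma_mul_incl, ← mul_sub]
  intro z hz
  rw [Set.mem_Ici, not_le] at hz
  rw [coeff_gamma_mul, map_sub, coeff_incl, sub_neg_eq_add]
  rcases (by omega : z + 1 < 0 ∨ z + 1 = 0) with h | h
  · rw [hx _ (by rw [Set.mem_Ici]; omega), if_neg (by omega), sub_zero, map_zero]
  · rw [h, if_pos rfl, sub_self, map_zero]

section Monic

variable {n : ℕ}

variable (φ) in
noncomputable def monicPoly (lam : Fin n → Λ[H]) : Λ[H ⋊[φ] Multiplicative ℤ] :=
  (gamma φ 1 - 1) ^ n + ∑ i, incl φ (lam i) * (gamma φ 1 - 1) ^ (i : ℕ)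

theorem sum_incl_mul_pow_mem_supportedIn (c : Fin n → Λ[H]) :
    ∑ i, incl φ (c i) * (gamma φ 1 - 1) ^ (i : ℕ) ∈ supportedIn φ (Set.Ico 0 n) :=
  sum_mem fun i _ ↦ incl_mul_mem_supportedIn _ <|
    supportedIn_mono (Set.Icc_subset_Ico_right (by exact_mod_cast i.2))
      (gamma_one_sub_one_pow_mem_supportedIn i)

theorem monicPoly_mem_supportedIn (lam : Fin n → Λ[H]) :
    monicPoly φ lam ∈ supportedIn φ (Set.Icc 0 n) :=
  add_mem (gamma_one_sub_one_pow_mem_supportedIn n)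
    (supportedIn_mono Set.Ico_subset_Icc_self (sum_incl_mul_pow_mem_supportedIn lam))

theorem coeff_monicPoly_self (lam : Fin n → Λ[H]) : coeff φ n (monicPoly φ lam) = 1 := by
  rw [monicPoly, map_add, coeff_gamma_one_sub_one_pow_self,
    sum_incl_mul_pow_mem_supportedIn lam n (by simp), add_zero]

theorem isUnit_coeff_zero_monicPoly {lam : Fin n → Λ[H]}
    (hlam : ∀ i, lam i ∈ (⊥ : Ideal Λ[H]).jacobson) :
    IsUnit (coeff φ 0 (monicPoly φ lam)) := by
  simp only [monicPoly, map_add, map_sum, coeff_incl_mul, coeff_zero_gamma_one_sub_one_pow]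
  refine isUnit_add_of_mem_jacobson_bot (isUnit_neg_one.pow n) (sum_mem fun i _ ↦ ?_)
  rw [((Commute.neg_one_right _).pow_right _).eq]
  exact Ideal.mul_mem_left _ _ (hlam i)

theorem eq_zero_of_sum_incl_mul_pow_eq_zero :
    ∀ {n : ℕ} (c : Fin n → Λ[H]),
      ∑ i, incl φ (c i) * (gamma φ 1 - 1) ^ (i : ℕ) = 0 → c = 0
  | 0, c, _ => Subsingleton.elim _ _
  | n + 1, c, h => by
    simp only [Fin.sum_univ_castSucc, Fin.val_castSucc, Fin.val_last] at h
    have hlast : c (Fin.last n) = 0 := by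
      have := congrArg (coeff φ n) h
      rwa [map_add, sum_incl_mul_pow_mem_supportedIn _ n (by simp), zero_add,
        coeff_incl_mul, coeff_gamma_one_sub_one_pow_self, mul_one, map_zero] at this
    rw [hlast, map_zero, zero_mul, add_zero] at h
    have hinit := eq_zero_of_sum_incl_mul_pow_eq_zero (c ∘ Fin.castSucc) h
    funext i
    induction i using Fin.lastCases with
    | last => exact hlast
    | cast i => exact congrFun hinit i

end Monic

section Quotient

variable (φ) {n : ℕ} (lam : Fin n → Λ[H])

noncomputable abbrev quotientModule (I : Ideal Λ[H ⋊[φ] Multiplicative ℤ]) :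
    Module Λ[H] (Λ[H ⋊[φ] Multiplicative ℤ] ⧸ I) :=
  Module.compHom _ (incl φ)

attribute [local instance] quotientModule

noncomputable def powSpan :
    Submodule Λ[H] (Λ[H ⋊[φ] Multiplicative ℤ] ⧸ Ideal.span {monicPoly φ lam}) :=
  Submodule.span Λ[H]
    (Set.range fun i : Fin n ↦ Submodule.Quotient.mk ((gamma φ 1 - 1) ^ (i : ℕ)))

theorem mk_incl_mul {I : Ideal Λ[H ⋊[φ] Multiplicative ℤ]} (r : Λ[H])
    (x : Λ[H ⋊[φ] Multiplicative ℤ]) :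
    (Submodule.Quotient.mk (incl φ r * x) : _ ⧸ I) = r • Submodule.Quotient.mk x :=
  Submodule.Quotient.mk_smul _ (incl φ r) x

theorem mk_pow_mem_powSpan {i : ℕ} (hi : i ≤ n) :
    Submodule.Quotient.mk ((gamma φ 1 - 1) ^ i) ∈ powSpan φ lam := by
  rcases hi.lt_or_eq with hi | rfl
  · exact Submodule.subset_span ⟨⟨i, hi⟩, rfl⟩
  have hf : (Submodule.Quotient.mk ((gamma φ 1 - 1) ^ i +
      ∑ j, incl φ (lam j) * (gamma φ 1 - 1) ^ (j : ℕ)) : _ ⧸ Ideal.span {monicPoly φ lam}) = 0 :=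
    (Submodule.Quotient.mk_eq_zero _).mpr (Ideal.subset_span rfl)
  rw [Submodule.Quotient.mk_add, add_eq_zero_iff_eq_neg] at hf
  rw [hf, ← Submodule.mkQ_apply, map_sum]
  refine neg_mem (sum_mem fun i _ ↦ ?_)
  rw [Submodule.mkQ_apply, mk_incl_mul]
  exact Submodule.smul_mem _ _ (Submodule.subset_span ⟨i, rfl⟩)

theorem incl_mem_smulStabilizer (r : Λ[H]) :
    incl φ r ∈ smulStabilizer Λ[H ⋊[φ] Multiplicative ℤ] (powSpan φ lam) :=
  fun _ hw ↦ Submodule.smul_mem _ r hw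

theorem gamma_one_sub_one_mem_smulStabilizer :
    gamma φ 1 - 1 ∈ smulStabilizer Λ[H ⋊[φ] Multiplicative ℤ] (powSpan φ lam) :=
  mem_smulStabilizer_span (ι := incl φ) (fun _ _ ↦ rfl)
    (fun r ↦ ⟨twist φ 1 r, twist φ 1 r - r, by rw [sub_mul, gamma_mul_incl, map_sub]; noncomm_ring⟩)
    (fun i ↦ by
      rw [← Submodule.Quotient.mk_smul, smul_eq_mul, ← pow_succ']
      exact mk_pow_mem_powSpan φ lam i.2)

theorem gamma_one_mem_smulStabilizer :
    gamma φ 1 ∈ smulStabilizer Λ[H ⋊[φ] Multiplicative ℤ] (powSpan φ lam) := by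
  rw [← sub_add_cancel (gamma φ 1) 1]
  exact add_mem (gamma_one_sub_one_mem_smulStabilizer φ lam) (one_mem _)

theorem mk_mem_powSpan_of_mem {a : Λ[H ⋊[φ] Multiplicative ℤ]}
    (ha : a ∈ smulStabilizer Λ[H ⋊[φ] Multiplicative ℤ] (powSpan φ lam)) :
    Submodule.Quotient.mk a ∈ powSpan φ lam := by
  have := ha _ (mk_pow_mem_powSpan φ lam n.zero_le)
  rwa [pow_zero, ← Submodule.Quotient.mk_smul, smul_eq_mul, mul_one] at this

theorem mk_gamma_neg_one_mul_mem_powSpan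
    (h : Submodule.Quotient.mk (gamma φ (-1)) ∈ powSpan φ lam) {x : Λ[H ⋊[φ] Multiplicative ℤ]}
    (hx : x ∈ supportedIn φ (Set.Ici 0)) :
    Submodule.Quotient.mk (gamma φ (-1) * x) ∈ powSpan φ lam := by
  have hrem := mem_of_mem_supportedIn_Ici_zero (incl_mem_smulStabilizer φ lam)
    (gamma_one_mem_smulStabilizer φ lam) (gamma_neg_one_mul_sub_mem_supportedIn hx)
  rw [← sub_add_cancel (gamma φ (-1) * x), Submodule.Quotient.mk_add, mk_incl_mul]
  exact add_mem (mk_mem_powSpan_of_mem φ lam hrem) (Submodule.smul_mem _ _ h)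

theorem mk_gamma_neg_one_mem_powSpan {lam : Fin n → Λ[H]}
    (hlam : ∀ i, lam i ∈ (⊥ : Ideal Λ[H]).jacobson) :
    Submodule.Quotient.mk (gamma φ (-1)) ∈ powSpan φ lam := by
  obtain ⟨u, hu⟩ := (isUnit_coeff_zero_monicPoly (φ := φ) hlam).map (twist φ (-1))
  have hrem := mem_of_mem_supportedIn_Ici_zero (incl_mem_smulStabilizer φ lam)
    (gamma_one_mem_smulStabilizer φ lam) (gamma_neg_one_mul_sub_mem_supportedIn
      (supportedIn_mono Set.Icc_subset_Ici_self (monicPoly_mem_supportedIn lam)))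
  have hf : (Submodule.Quotient.mk (gamma φ (-1) * monicPoly φ lam) :
      _ ⧸ Ideal.span {monicPoly φ lam}) = 0 :=
    (Submodule.Quotient.mk_eq_zero _).mpr (Ideal.mul_mem_left _ _ (Ideal.subset_span rfl))
  have hu_mem := mk_mem_powSpan_of_mem φ lam hrem
  rw [Submodule.Quotient.mk_sub, hf, zero_sub, neg_mem_iff, ← hu, mk_incl_mul] at hu_mem
  have := Submodule.smul_mem _ (↑u⁻¹ : Λ[H]) hu_mem
  rwa [smul_smul, Units.inv_mul, one_smul] at this

theorem gamma_neg_one_mem_smulStabilizer {lam : Fin n → Λ[H]}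
    (hlam : ∀ i, lam i ∈ (⊥ : Ideal Λ[H]).jacobson) :
    gamma φ (-1) ∈ smulStabilizer Λ[H ⋊[φ] Multiplicative ℤ] (powSpan φ lam) :=
  mem_smulStabilizer_span (ι := incl φ) (fun _ _ ↦ rfl)
    (fun r ↦ ⟨twist φ (-1) r, 0, by rw [gamma_mul_incl, map_zero, add_zero]⟩)
    (fun i ↦ by
      rw [← Submodule.Quotient.mk_smul, smul_eq_mul]
      exact mk_gamma_neg_one_mul_mem_powSpan φ lam (mk_gamma_neg_one_mem_powSpan φ hlam)
        (supportedIn_mono Set.Icc_subset_Ici_self (gamma_one_sub_one_pow_mem_supportedIn _)))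

theorem powSpan_eq_top {lam : Fin n → Λ[H]} (hlam : ∀ i, lam i ∈ (⊥ : Ideal Λ[H]).jacobson) :
    powSpan φ lam = ⊤ := by
  have hS := eq_top_of_gamma_mem (incl_mem_smulStabilizer φ lam)
    (gamma_one_mem_smulStabilizer φ lam) (gamma_neg_one_mem_smulStabilizer φ hlam)
  refine eq_top_iff.mpr fun m _ ↦ ?_
  obtain ⟨a, rfl⟩ := Submodule.Quotient.mk_surjective _ m
  exact mk_mem_powSpan_of_mem φ lam (hS ▸ Subring.mem_top a)

theorem linearIndependent_mk_pow {lam : Fin n → Λ[H]}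
    (hlam : ∀ i, lam i ∈ (⊥ : Ideal Λ[H]).jacobson) :
    LinearIndependent Λ[H] fun i : Fin n ↦
      (Submodule.Quotient.mk ((gamma φ 1 - 1) ^ (i : ℕ)) : _ ⧸ Ideal.span {monicPoly φ lam}) := by
  rw [Fintype.linearIndependent_iff]
  intro c hc
  have hmem : ∑ i, incl φ (c i) * (gamma φ 1 - 1) ^ (i : ℕ) ∈ Ideal.span {monicPoly φ lam} := by
    rw [← Submodule.Quotient.mk_eq_zero, ← Submodule.mkQ_apply, map_sum]
    simpa [mk_incl_mul] using hc
  obtain ⟨a, ha⟩ := Ideal.mem_span_singleton'.mp hmem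
  have ha0 : a = 0 := eq_zero_of_mul_mem_supportedIn_Ico (monicPoly_mem_supportedIn lam)
    (by rw [coeff_monicPoly_self]; exact isUnit_one) (isUnit_coeff_zero_monicPoly hlam)
    (ha ▸ sum_incl_mul_pow_mem_supportedIn c)
  rw [ha0, zero_mul] at ha
  exact congrFun (eq_zero_of_sum_incl_mul_pow_eq_zero c ha.symm)

theorem exists_basis_mk_pow {lam : Fin n → Λ[H]}
    (hlam : ∀ i, lam i ∈ (⊥ : Ideal Λ[H]).jacobson) :
    ∃ b : Module.Basis (Fin n) Λ[H] (_ ⧸ Ideal.span {monicPoly φ lam}),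
      ∀ i, b i = Submodule.Quotient.mk ((gamma φ 1 - 1) ^ (i : ℕ)) :=
  ⟨.mk (linearIndependent_mk_pow φ hlam) (powSpan_eq_top φ hlam).ge, Module.Basis.mk_apply _ _⟩

end Quotient

end SkewLaurent


theorem quotient_free_over_subalgebra_general (Λ : Type*) [Ring Λ] (H : Type*) [Group H]
    (φ : Multiplicative ℤ →* MulAut H) (n : ℕ)
    (lam : Fin n → MonoidAlgebra Λ H)
    (hlam : ∀ i, lam i ∈ (⊥ : Ideal (MonoidAlgebra Λ H)).jacobson) :
    let G := H ⋊[φ] Multiplicative ℤ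
    let ι : MonoidAlgebra Λ H →+* MonoidAlgebra Λ G :=
      MonoidAlgebra.mapDomainRingHom Λ (SemidirectProduct.inl : H →* G)
    let t : MonoidAlgebra Λ G :=
      MonoidAlgebra.single (SemidirectProduct.inr (Multiplicative.ofAdd 1) : G) (1 : Λ) - 1
    let f : MonoidAlgebra Λ G := t ^ n + ∑ i : Fin n, ι (lam i) * t ^ (i : ℕ)
    letI : Module (MonoidAlgebra Λ H)
        (MonoidAlgebra Λ G ⧸ (Ideal.span {f} : Ideal (MonoidAlgebra Λ G))) :=
      Module.compHom _ ι
    ∃ b : Module.Basis (Fin n) (MonoidAlgebra Λ H)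
        (MonoidAlgebra Λ G ⧸ (Ideal.span {f} : Ideal (MonoidAlgebra Λ G))),
      ∀ i : Fin n, b i = Submodule.Quotient.mk (t ^ (i : ℕ)) :=
  SkewLaurent.exists_basis_mk_pow φ hlam

/-- Let `Λ` be a ring, `G = H ⋊ Γ` with `Γ` infinite cyclic generated by `γ`, and
`f = tⁿ + ∑_{i<n} λᵢ tⁱ ∈ Λ[G]` a monic polynomial in `t = γ - 1` of degree `n` with
coefficients `λᵢ` in the Jacobson radical of `Λ[H]`.  Then `M = Λ[G]/Λ[G]f` is finitely
generated and free as a `Λ[H]`-module, with basis the residue classes of `1, t, …, t^{n-1}`. -/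
theorem quotient_free_over_subalgebra (Λ : Type*) [Ring Λ] (H : Type*) [Group H]
    (φ : Multiplicative ℤ →* MulAut H) (n : ℕ) (hn : 0 < n)
    (lam : Fin n → MonoidAlgebra Λ H)
    (hlam : ∀ i, lam i ∈ (⊥ : Ideal (MonoidAlgebra Λ H)).jacobson) :
    let G := H ⋊[φ] Multiplicative ℤ
    let ι : MonoidAlgebra Λ H →+* MonoidAlgebra Λ G :=
      MonoidAlgebra.mapDomainRingHom Λ (SemidirectProduct.inl : H →* G)
    let t : MonoidAlgebra Λ G :=
      MonoidAlgebra.single (SemidirectProduct.inr (Multiplicative.ofAdd 1) : G) (1 : Λ) - 1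
    let f : MonoidAlgebra Λ G := t ^ n + ∑ i : Fin n, ι (lam i) * t ^ (i : ℕ)
    letI : Module (MonoidAlgebra Λ H)
        (MonoidAlgebra Λ G ⧸ (Ideal.span {f} : Ideal (MonoidAlgebra Λ G))) :=
      Module.compHom _ ι
    ∃ b : Module.Basis (Fin n) (MonoidAlgebra Λ H)
        (MonoidAlgebra Λ G ⧸ (Ideal.span {f} : Ideal (MonoidAlgebra Λ G))),
      ∀ i : Fin n, b i = Submodule.Quotient.mk (t ^ (i : ℕ)) :=
  quotient_free_over_subalgebra_general Λ H φ n lam hlam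
end

section
/- Let Λ be a finite ℤ_p-algebra, G = H ⋊ Γ with H finite and Γ ≅ ℤ_p topologically generated by γ, and t := γ − 1. Then for n ≥ n_0 (so that γ^{p^n} is central), the map Λ[[G]](γ^{p^n}−1)^{-1} → Λ[[G/Γ^{p^n}]], λ(γ^{p^n}−1)^{-1} ↦ λ mod (γ^{p^n}−1), induces an isomorphism of Λ[[G]]-bimodules Λ[[G]](γ^{p^n}−1)^{-1}/Λ[[G]] ≅ Λ[[G/Γ^{p^n}]], and the inclusion into level n+1 corresponds to multiplication by the norm element N_n = Σ_{k=0}^{p−1} γ^{p^n k}; passing to the colimit, Λ[[G]]_S/Λ[[G]] ≅ colim_n Λ[[G/Γ^{p^n}]]. -/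
open Polynomial in
private lemma my_pow_mem (p : ℕ) (hp : p.Prime) (m : ℕ) :
    ((X + 1 : ℤ[X]) ^ p ^ m - 1) ∈ (Ideal.span {(p : ℤ[X]), X}) ^ (m + 1) := by
  induction m with
  | zero =>
    have h0 : ((X + 1 : ℤ[X]) ^ p ^ 0 - 1) = X := by
      rw [pow_zero, pow_one, add_sub_cancel_right]
    rw [h0, zero_add, pow_one]
    exact Ideal.subset_span (Set.mem_insert_of_mem _ rfl)
  | succ m ih =>
    set J : Ideal ℤ[X] := Ideal.span {(p : ℤ[X]), X} with hJ
    set D : ℤ[X] := (X + 1 : ℤ[X]) ^ p ^ m - 1 with hD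
    have hDJ : D ∈ J := by
      have := (Ideal.pow_le_pow_right (Nat.succ_le_succ (Nat.zero_le m))) ih
      simpa using this
    have key : (X + 1 : ℤ[X]) ^ p ^ (m + 1) - 1
        = ∑ k ∈ Finset.range p, D ^ (k + 1) * ((p.choose (k + 1) : ℤ) : ℤ[X]) := by
      have h1 : (X + 1 : ℤ[X]) ^ p ^ (m + 1) = (D + 1) ^ p := by
        rw [hD, sub_add_cancel, ← pow_mul, ← pow_succ]
      rw [h1, add_pow, Finset.sum_range_succ']
      simp [one_pow, mul_one, pow_zero]
    rw [key]
    refine Ideal.sum_mem _ fun k hk => ?_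
    have hterm : D ^ (k + 1) * ((p.choose (k + 1) : ℤ) : ℤ[X])
        = D * (D ^ k * ((p.choose (k + 1) : ℤ) : ℤ[X])) := by ring
    rw [hterm, pow_succ]
    refine Ideal.mul_mem_mul ih ?_
    rcases Nat.eq_zero_or_pos k with rfl | hkpos
    · have : (D ^ 0 * ((p.choose 1 : ℤ) : ℤ[X])) = (p : ℤ[X]) := by
        simp [Nat.choose_one_right]
      rw [this]
      exact Ideal.subset_span (Set.mem_insert _ _)
    · exact Ideal.mul_mem_right _ _ (J.pow_mem_of_mem hDJ k hkpos)

open Polynomial in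
private lemma my_decomp (p : ℕ) (hp : p.Prime) (i k m : ℕ) (h : k + i + 1 ≤ m + 1)
    {R : Type*} [Ring R] (hpR : (p : R) ^ (i + 1) = 0) (t : R) :
    ∃ c : R, (t + 1) ^ p ^ m - 1 = c * t ^ k := by
  have hmem := my_pow_mem p hp m
  have hle : (Ideal.span {(p : ℤ[X]), X}) ^ (m + 1)
      ≤ Ideal.span {(p : ℤ[X])} ^ (i + 1) ⊔ Ideal.span {(X : ℤ[X])} ^ k := by
    rw [Ideal.span_insert]
    calc (Ideal.span {(p : ℤ[X])} ⊔ Ideal.span {(X : ℤ[X])}) ^ (m + 1)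
        ≤ (Ideal.span {(p : ℤ[X])} ⊔ Ideal.span {(X : ℤ[X])}) ^ ((i + 1) + k) :=
          Ideal.pow_le_pow_right (by omega)
      _ ≤ _ := Ideal.sup_pow_add_le_pow_sup_pow
  have hmem2 := hle hmem
  rw [Ideal.span_singleton_pow, Ideal.span_singleton_pow, Submodule.mem_sup] at hmem2
  obtain ⟨y, hy, z, hz, hyz⟩ := hmem2
  rw [Ideal.mem_span_singleton'] at hy hz
  obtain ⟨d, rfl⟩ := hy
  obtain ⟨c0, rfl⟩ := hz
  refine ⟨Polynomial.aeval t c0, ?_⟩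
  have h2 := congrArg (Polynomial.aeval t) hyz
  simp only [map_add, map_mul, map_pow, map_natCast, map_sub, map_one, Polynomial.aeval_X] at h2
  rw [hpR, mul_zero, zero_add] at h2
  exact h2.symm


private lemma aux_iso {R : Type*} [Ring R] {Q : Type*} [Ring Q] (φ : R →+* Q)
    (hinj : Function.Injective φ) [Module R Q]
    (hsmul : ∀ (a : R) (q : Q), a • q = φ a * q) (ξ : R) (hu : IsUnit (φ ξ))
    (w : Q) (hw : w = Ring.inverse (φ ξ)) :
    ∃ e : (↥(Submodule.span R {w}) ⧸ Submodule.comap (Submodule.span R {w}).subtype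
        (Submodule.span R {(1 : Q)})) ≃ₗ[R] (R ⧸ Ideal.span {ξ}),
      ∀ (a : R) (h : a • w ∈ Submodule.span R {w}),
        e (Submodule.Quotient.mk ⟨a • w, h⟩) = Submodule.Quotient.mk a := by
  have hphi : φ ξ * w = 1 := by rw [hw]; exact Ring.mul_inverse_cancel _ hu
  have hphi' : w * φ ξ = 1 := by rw [hw]; exact Ring.inverse_mul_cancel _ hu
  set M : Submodule R Q := Submodule.span R {w} with hM
  set B : Submodule R ↥M := Submodule.comap M.subtype (Submodule.span R {(1 : Q)}) with hB
  have hmem : ∀ a : R, LinearMap.toSpanSingleton R Q w a ∈ M := fun a =>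
    Submodule.smul_mem _ a (Submodule.mem_span_singleton_self w)
  set f : R →ₗ[R] ↥M := (LinearMap.toSpanSingleton R Q w).codRestrict M hmem with hf
  set F : R →ₗ[R] ↥M ⧸ B := B.mkQ.comp f with hF
  have hFapp : ∀ (a : R) (h : a • w ∈ M),
      F a = Submodule.Quotient.mk (⟨a • w, h⟩ : ↥M) := fun a h => rfl
  have hFsurj : Function.Surjective F := by
    intro z
    obtain ⟨y, rfl⟩ := Submodule.Quotient.mk_surjective B z
    obtain ⟨a, ha⟩ := Submodule.mem_span_singleton.mp y.2
    refine ⟨a, ?_⟩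
    rw [hFapp a (ha ▸ y.2)]
    exact congrArg _ (Subtype.ext ha)
  have hker : LinearMap.ker F = Ideal.span {ξ} := by
    ext a
    have hmemB : F a = 0 ↔ a • w ∈ Submodule.span R {(1 : Q)} := by
      rw [hFapp a (hmem a), Submodule.Quotient.mk_eq_zero]
      exact Iff.rfl
    rw [LinearMap.mem_ker, hmemB]
    constructor
    · intro h
      obtain ⟨b, hb⟩ := Submodule.mem_span_singleton.mp h
      rw [hsmul, hsmul, mul_one] at hb
      have hba : φ (b * ξ) = φ a := by
        rw [map_mul, hb, mul_assoc, hphi', mul_one]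
      exact Ideal.mem_span_singleton'.mpr ⟨b, hinj hba⟩
    · intro h
      obtain ⟨b, hb⟩ := Ideal.mem_span_singleton'.mp h
      refine Submodule.mem_span_singleton.mpr ⟨b, ?_⟩
      rw [hsmul, hsmul, mul_one, ← hb, map_mul, mul_assoc, hphi, mul_one]
  let e₁ := F.quotKerEquivOfSurjective hFsurj
  let e₂ : (R ⧸ LinearMap.ker F) ≃ₗ[R] (R ⧸ Ideal.span {ξ}) :=
    Submodule.quotEquivOfEq _ _ hker
  refine ⟨e₁.symm.trans e₂, fun a h => ?_⟩
  have h1 : e₁ (Submodule.Quotient.mk a) = F a := rfl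
  have h2 : e₁.symm (Submodule.Quotient.mk (⟨a • w, h⟩ : ↥M)) = Submodule.Quotient.mk a := by
    rw [← hFapp a h, ← h1, LinearEquiv.symm_apply_apply]
  show e₂ (e₁.symm (Submodule.Quotient.mk (⟨a • w, h⟩ : ↥M))) = Submodule.Quotient.mk a
  exact (congrArg e₂ h2).trans (Submodule.quotEquivOfEq_mk _ _ hker a)



/-- Let `R` play the role of `Λ[[G]]` (`Λ` a finite `ℤ_p`-algebra, so `p^(i+1) = 0`, and
`G = H ⋊ Γ` with `H` finite, `Γ ≅ ℤ_p` topologically generated by `γ`), and let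
`φ : R → Q` be the localisation at Venjakob's set `S` (equivalently, by Lemma 3.2, at
`T = {(γ-1)^k}`), with the `R`-module structure on `Q` given by `a • q = φ a * q`.
For `m ≥ n` (so that `γ^{p^m}` is central) the map
`λ(γ^{p^m}-1)⁻¹ ↦ λ mod (γ^{p^m}-1)` induces an isomorphism
`R·(γ^{p^m}-1)⁻¹ / R ≅ R/R(γ^{p^m}-1)` (`= Λ[[G/Γ^{p^m}]]`), the inclusion of level `n` into
level `n+1` corresponds to right multiplication by the norm element
`N_n = ∑_{k<p} γ^{p^n k}`, and in the colimit `Q = Λ[[G]]_S` is exhausted by the submodules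
`R·(γ^{p^m}-1)⁻¹`, i.e. `Λ[[G]]_S/Λ[[G]] ≅ colim_m Λ[[G/Γ^{p^m}]]`. -/
theorem localisation_quotient_iso (p : ℕ) (hp : p.Prime) (i n : ℕ)
    (R : Type*) [Ring R] (hpR : (p : R) ^ (i + 1) = 0)
    (γ : Rˣ)
    (hcen : ∀ m : ℕ, n ≤ m → ∀ a : R, Commute ((γ : R) ^ p ^ m) a)
    (Q : Type*) [Ring Q] (φ : R →+* Q) (hinj : Function.Injective φ)
    [Module R Q] (hsmul : ∀ (a : R) (q : Q), a • q = φ a * q)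
    (hT : ∀ k : ℕ, IsUnit (φ (((γ : R) - 1) ^ k)))
    (hQ : ∀ q : Q, ∃ (a : R) (k : ℕ), φ (((γ : R) - 1) ^ k) * q = φ a)
    (hun : ∀ m : ℕ, IsUnit (φ ((γ : R) ^ p ^ m - 1))) :
    let x : ℕ → R := fun m => (γ : R) ^ p ^ m - 1
    let v : ℕ → Q := fun m => Ring.inverse (φ (x m))
    let Msub : ℕ → Submodule R Q := fun m => Submodule.span R {v m}
    let Bsub : (m : ℕ) → Submodule R ↥(Msub m) := fun m =>
      Submodule.comap (Msub m).subtype (Submodule.span R {(1 : Q)})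
    (∃ (hle : Msub n ≤ Msub (n + 1))
        (e : (↥(Msub n) ⧸ Bsub n) ≃ₗ[R] (R ⧸ Ideal.span {x n}))
        (e' : (↥(Msub (n + 1)) ⧸ Bsub (n + 1)) ≃ₗ[R] (R ⧸ Ideal.span {x (n + 1)})),
      (∀ a : R,
        e (Submodule.Quotient.mk
            ⟨a • v n, Submodule.smul_mem _ a (Submodule.mem_span_singleton_self _)⟩) =
          Submodule.Quotient.mk a) ∧
      (∀ a : R,
        e' (Submodule.Quotient.mk
            ⟨a • v (n + 1), Submodule.smul_mem _ a (Submodule.mem_span_singleton_self _)⟩) =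
          Submodule.Quotient.mk a) ∧
      (∀ a : R,
        e' (Submodule.Quotient.mk
            (Submodule.inclusion hle
              ⟨a • v n, Submodule.smul_mem _ a (Submodule.mem_span_singleton_self _)⟩)) =
          Submodule.Quotient.mk (a * ∑ k ∈ Finset.range p, (γ : R) ^ (p ^ n * k)))) ∧
    (∀ q : Q, ∃ m : ℕ, n ≤ m ∧ ∃ a : R, q = φ a * v m) := by
  intro x v Msub Bsub
  have hvm : ∀ m : ℕ, φ (x m) * v m = 1 := fun m => Ring.mul_inverse_cancel _ (hun m)
  set N : R := ∑ k ∈ Finset.range p, (γ : R) ^ (p ^ n * k) with hN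
  have hxsucc : x (n + 1) = x n * N := by
    have h1 : x (n + 1) = ((γ : R) ^ p ^ n) ^ p - 1 := by
      show (γ : R) ^ p ^ (n + 1) - 1 = _
      rw [pow_succ, pow_mul]
    have h2 : N = ∑ k ∈ Finset.range p, ((γ : R) ^ p ^ n) ^ k :=
      Finset.sum_congr rfl fun k _ => pow_mul _ _ _
    rw [h1, h2, mul_geom_sum]
  have hvN : v n = φ N * v (n + 1) := by
    refine (hun n).mul_left_cancel ?_
    rw [hvm n, ← mul_assoc, ← map_mul, ← hxsucc]
    exact (hvm (n + 1)).symm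
  have hsmulvn : ∀ a : R, a • v n = (a * N) • v (n + 1) := fun a => by
    rw [hsmul, hsmul, hvN, ← mul_assoc, ← map_mul]
  have hle : Msub n ≤ Msub (n + 1) := by
    refine Submodule.span_le.mpr (Set.singleton_subset_iff.mpr ?_)
    refine Submodule.mem_span_singleton.mpr ⟨N, ?_⟩
    rw [hsmul]
    exact hvN.symm
  obtain ⟨e, he⟩ := aux_iso φ hinj hsmul (x n) (hun n) (v n) rfl
  obtain ⟨e', he'⟩ := aux_iso φ hinj hsmul (x (n + 1)) (hun (n + 1)) (v (n + 1)) rfl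
  constructor
  · refine ⟨hle, e, e', fun a => he a _, fun a => he' a _, fun a => ?_⟩
    have h2 : Submodule.inclusion hle
        (⟨a • v n, Submodule.smul_mem _ a (Submodule.mem_span_singleton_self _)⟩ : ↥(Msub n))
        = (⟨(a * N) • v (n + 1),
            Submodule.smul_mem _ _ (Submodule.mem_span_singleton_self _)⟩ : ↥(Msub (n + 1))) :=
      Subtype.ext (hsmulvn a)
    rw [h2]
    exact he' (a * N) _
  · intro q
    obtain ⟨a, k, hak⟩ := hQ q
    refine ⟨n + (k + i), Nat.le_add_right _ _, ?_⟩
    set m : ℕ := n + (k + i) with hm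
    obtain ⟨c, hc⟩ := my_decomp p hp i k m (by omega) hpR ((γ : R) - 1)
    rw [sub_add_cancel] at hc
    have hxc : x m = c * ((γ : R) - 1) ^ k := hc
    have hcomm : ∀ b : R, Commute (x m) b := fun b =>
      (hcen m (Nat.le_add_right _ _) b).sub_left (Commute.one_left b)
    have h3 : φ (x m) * q = φ (c * a) := by
      rw [hxc, map_mul, mul_assoc, hak, ← map_mul]
    have hq' : q = Ring.inverse (φ (((γ : R) - 1) ^ k)) * φ a := by
      rw [← hak, ← mul_assoc, Ring.inverse_mul_cancel _ (hT k), one_mul]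
    have hcq : Commute (φ (x m)) q := by
      rw [hq']
      have h1 : Commute (φ (x m)) (φ (((γ : R) - 1) ^ k)) := by
        show φ (x m) * _ = _ * φ (x m)
        rw [← map_mul, ← map_mul, (hcomm _).eq]
      have h2 : Commute (φ (x m)) (Ring.inverse (φ (((γ : R) - 1) ^ k))) := by
        obtain ⟨u, hu⟩ := hT k
        rw [← hu, Ring.inverse_unit]
        exact (hu.symm ▸ h1).units_inv_right
      refine h2.mul_right ?_
      show φ (x m) * _ = _ * φ (x m)
      rw [← map_mul, ← map_mul, (hcomm a).eq]
    have h4 : q * φ (x m) = φ (c * a) := by rw [← hcq.eq]; exact h3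
    refine ⟨c * a, ?_⟩
    calc q = q * (φ (x m) * v m) := by rw [hvm m, mul_one]
      _ = q * φ (x m) * v m := by rw [mul_assoc]
      _ = φ (c * a) * v m := by rw [h4]
end

section
/- Let Λ be a finite ℤ_p-algebra, H a finite group, G = H ⋊ Γ with Γ ≅ ℤ_p generated topologically by γ, and t = γ − 1. If s ∈ Λ[[G]] is such that both the kernel and cokernel of right multiplication by s on Λ[[G]] are annihilated by powers of t, then the cokernel Λ[[G]]/Λ[[G]]s is finite. -/
/-! Since `t ^ k ∈ Λ[[G]] s`, every class in the cokernel is represented by the truncation of a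
power series below degree `k`, i.e. by one of the finitely many polynomials of degree `< k` over
the finite ring `Λ[H]`. -/

open PowerSeries

theorem MonoidAlgebra.finite {R G : Type*} [Semiring R] [Finite R] [Finite G] :
    Finite (MonoidAlgebra R G) :=
  .of_equiv _ (MonoidAlgebra.coeffEquiv.trans Finsupp.equivFunOnFinite).symm

theorem PowerSeries.finite_quotient_of_X_pow_mem {R : Type*} [Ring R] [Finite R]
    {I : Ideal R⟦X⟧} {k : ℕ} (hk : X ^ k ∈ I) : Finite (R⟦X⟧ ⧸ I) := by
  have : Finite (Polynomial.degreeLT R k) :=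
    .of_equiv _ (Polynomial.degreeLTEquiv R k).toEquiv.symm
  refine .of_surjective (fun p : Polynomial.degreeLT R k ↦ Submodule.Quotient.mk (p : R⟦X⟧)) ?_
  rintro ⟨f⟩
  refine ⟨⟨trunc k f, Polynomial.mem_degreeLT.mpr (degree_trunc_lt f k)⟩, ?_⟩
  refine (Submodule.Quotient.eq I).mpr (I.neg_mem_iff.mp ?_)
  rw [neg_sub, sub_eq_of_eq_add (eq_shift_mul_X_pow_add_trunc k f)]
  exact I.mul_mem_left _ hk

theorem coker_finite_of_t_torsion_general
    (Λ : Type) [Ring Λ] [Finite Λ]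
    (H : Type) [Group H] [Finite H]
    (s : PowerSeries (MonoidAlgebra Λ H))
    (hcoker : ∃ k : ℕ, ∀ r : PowerSeries (MonoidAlgebra Λ H),
        (PowerSeries.X : PowerSeries (MonoidAlgebra Λ H)) ^ k * r ∈
          (Ideal.span {s} : Ideal (PowerSeries (MonoidAlgebra Λ H)))) :
    Finite (PowerSeries (MonoidAlgebra Λ H) ⧸
      (Ideal.span {s} : Ideal (PowerSeries (MonoidAlgebra Λ H)))) := by
  obtain ⟨k, hk⟩ := hcoker
  have := MonoidAlgebra.finite (R := Λ) (G := H)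
  exact finite_quotient_of_X_pow_mem (by simpa using hk 1)

/-- Let `Λ` be a finite `ℤ_p`-algebra, `H` a finite group, and model
`Λ[[G]] = Λ[H][[t]]` for `G = H ⋊ Γ`, `Γ ≅ ℤ_p` topologically generated by `γ`, `t = γ - 1`.
If `s ∈ Λ[[G]]` is such that both the kernel and the cokernel of right multiplication by `s`
on `Λ[[G]]` are annihilated by powers of `t`, then the cokernel `Λ[[G]]/Λ[[G]]s` is finite. -/
theorem coker_finite_of_t_torsion (p : ℕ) [Fact p.Prime]
    (Λ : Type) [Ring Λ] [Finite Λ] [Algebra ℤ_[p] Λ]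
    (H : Type) [Group H] [Finite H]
    (s : PowerSeries (MonoidAlgebra Λ H))
    (hker : ∃ k : ℕ, ∀ r : PowerSeries (MonoidAlgebra Λ H),
        r * s = 0 → (PowerSeries.X : PowerSeries (MonoidAlgebra Λ H)) ^ k * r = 0)
    (hcoker : ∃ k : ℕ, ∀ r : PowerSeries (MonoidAlgebra Λ H),
        (PowerSeries.X : PowerSeries (MonoidAlgebra Λ H)) ^ k * r ∈
          (Ideal.span {s} : Ideal (PowerSeries (MonoidAlgebra Λ H)))) :
    Finite (PowerSeries (MonoidAlgebra Λ H) ⧸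
      (Ideal.span {s} : Ideal (PowerSeries (MonoidAlgebra Λ H)))) :=
  coker_finite_of_t_torsion_general Λ H s hcoker
end
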